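/- arXiv:1704.03606 — 7 statements merged into one kernel-verified Lean document; each statement's English description precedes it below -/
import Mathlib

section
/- For any joint pmf P_{XY} on 𝒳×𝒴 with 𝒳={1,…,M}, 𝒴={1,…,N} and any ε ≥ P_c(X), the supremum of P_c(Y|Z) over ALL channels P_{Z|Y} from Y to an arbitrary finite alphabet 𝒵 satisfying the Markov chain X–Y–Z and P_c(X|Z) ≤ ε is equal to the maximum of P_c(Y|Z) over channels whose output alphabet 𝒵 has cardinality at most N+1. -/
noncomputable section

/-- A row-stochastic matrix (channel) from an `n`-ary input to a `k`-ary output. -/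
def IsStoch {n k : ℕ} (F : Fin n → Fin k → ℝ) : Prop :=
  (∀ y z, 0 ≤ F y z) ∧ ∀ y, ∑ z, F y z = 1

/-- A joint pmf on `{1,…,m} × {1,…,n}`. -/
def IsPmf {m n : ℕ} (P : Fin m → Fin n → ℝ) : Prop :=
  (∀ x y, 0 ≤ P x y) ∧ ∑ x, ∑ y, P x y = 1

/-- `P_c(X) = max_x P_X(x)`. -/
def pcX {m n : ℕ} (P : Fin m → Fin n → ℝ) : ℝ := ⨆ x, ∑ y, P x y

/-- `P_c(Y) = max_y P_Y(y)`. -/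
def pcY {m n : ℕ} (P : Fin m → Fin n → ℝ) : ℝ := ⨆ y, ∑ x, P x y

/-- `P_c(X|Y) = Σ_y max_x P_{XY}(x,y)`. -/
def pcXgY {m n : ℕ} (P : Fin m → Fin n → ℝ) : ℝ := ∑ y, ⨆ x, P x y

/-- `𝒫(F) = P_c(X|Z) = Σ_z max_x Σ_y P_{XY}(x,y) F(y,z)` for a filter `F = P_{Z|Y}`
under the Markov chain `X – Y – Z`. -/
def privP {m n k : ℕ} (P : Fin m → Fin n → ℝ) (F : Fin n → Fin k → ℝ) : ℝ :=
  ∑ z, ⨆ x, ∑ y, P x y * F y z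

/-- `𝒰(F) = P_c(Y|Z) = Σ_z max_y P_Y(y) F(y,z)` for a filter `F = P_{Z|Y}`. -/
def privU {m n k : ℕ} (P : Fin m → Fin n → ℝ) (F : Fin n → Fin k → ℝ) : ℝ :=
  ∑ z, ⨆ y, (∑ x, P x y) * F y z

/-- The set `ℱ` of privacy filters: `n × (n+1)` row-stochastic matrices. -/
def filtSet (n : ℕ) : Set (Fin n → Fin (n + 1) → ℝ) := {F | IsStoch F}

/-- The privacy-aware guessing function
`h(P_{XY}, ε) = max { 𝒰(F) : F ∈ ℱ, 𝒫(F) ≤ ε }`. -/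
def hFun {m n : ℕ} (P : Fin m → Fin n → ℝ) (ε : ℝ) : ℝ :=
  sSup {u | ∃ F ∈ filtSet n, privP P F ≤ ε ∧ privU P F = u}

set_option maxHeartbeats 1000000

-- auxiliary lemmas
lemma bddAbove_range_fin {ι : Type*} [Finite ι] (f : ι → ℝ) : BddAbove (Set.range f) :=
  (Set.finite_range f).bddAbove

lemma ciSup_sum_le {ι β : Type*} [Fintype ι] [Nonempty ι] (s : Finset β)
    (f : ι → β → ℝ) : (⨆ i, ∑ z ∈ s, f i z) ≤ ∑ z ∈ s, ⨆ i, f i z :=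
  ciSup_le fun i => Finset.sum_le_sum fun z _ => le_ciSup (bddAbove_range_fin fun j => f j z) i

lemma continuous_ciSup_aux {ι X : Type*} [Fintype ι] [Nonempty ι] [TopologicalSpace X]
    (f : ι → X → ℝ) (hf : ∀ i, Continuous (f i)) :
    Continuous fun x => ⨆ i, f i x := by
  have : (fun x => ⨆ i, f i x) = fun x => Finset.univ.sup' Finset.univ_nonempty (f · x) := by
    funext x
    exact (Finset.sup'_univ_eq_ciSup (fun i => f i x)).symm
  rw [this]
  exact Continuous.finset_sup'_apply Finset.univ_nonempty fun i _ => hf i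


/-- For any joint pmf `P_{XY}` and any `ε ≥ P_c(X)`, the supremum of `P_c(Y|Z)` over ALL
channels `P_{Z|Y}` (to an arbitrary finite alphabet `𝒵`, forming the Markov chain
`X – Y – Z` and satisfying `P_c(X|Z) ≤ ε`) is attained by a channel whose output alphabet
has cardinality at most `N + 1`: there is a stochastic `F : Fin N → Fin (N+1) → ℝ`
with `𝒫(F) ≤ ε` whose utility `𝒰(F)` is the greatest element of the set of utilities
achievable by arbitrary finite-output channels. -/
theorem cardinality_bound {M N : ℕ} (hM : 0 < M) (hN : 0 < N)
    (P : Fin M → Fin N → ℝ) (hP : IsPmf P) (ε : ℝ) (hε : pcX P ≤ ε) :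
    ∃ F : Fin N → Fin (N + 1) → ℝ, IsStoch F ∧ privP P F ≤ ε ∧
      IsGreatest
        {u : ℝ | ∃ K : ℕ, ∃ Q : Fin N → Fin K → ℝ,
          IsStoch Q ∧ privP P Q ≤ ε ∧ privU P Q = u}
        (privU P F) := by
  haveI : NeZero M := ⟨hM.ne'⟩
  haveI : NeZero N := ⟨hN.ne'⟩
  -- continuity of privP and privU
  have hcontP : Continuous fun F : Fin N → Fin (N + 1) → ℝ => privP P F := by
    unfold privP
    apply continuous_finset_sum
    intro z _
    apply continuous_ciSup_aux
    intro x
    apply continuous_finset_sum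
    intro y _
    exact continuous_const.mul ((continuous_apply z).comp (continuous_apply y))
  have hcontU : Continuous fun F : Fin N → Fin (N + 1) → ℝ => privU P F := by
    unfold privU
    apply continuous_finset_sum
    intro z _
    apply continuous_ciSup_aux
    intro y
    exact continuous_const.mul ((continuous_apply z).comp (continuous_apply y))
  -- the feasible set
  set S : Set (Fin N → Fin (N + 1) → ℝ) := {F | IsStoch F ∧ privP P F ≤ ε} with hS
  have hclosed : IsClosed S := by
    have : S = (⋂ y, ⋂ z, {F : Fin N → Fin (N + 1) → ℝ | 0 ≤ F y z}) ∩
        ((⋂ y, {F : Fin N → Fin (N + 1) → ℝ | ∑ z, F y z = 1}) ∩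
          {F | privP P F ≤ ε}) := by
      ext F
      simp only [hS, Set.mem_setOf_eq, Set.mem_inter_iff, Set.mem_iInter, IsStoch]
      tauto
    rw [this]
    refine (isClosed_iInter fun y => isClosed_iInter fun z =>
        isClosed_le continuous_const ((continuous_apply z).comp (continuous_apply y))).inter
      ((isClosed_iInter fun y => isClosed_eq (continuous_finset_sum _ fun z _ =>
        (continuous_apply z).comp (continuous_apply y)) continuous_const).inter
        (isClosed_le hcontP continuous_const))
  have hsub : S ⊆ Set.Icc 0 1 := by
    rintro F ⟨⟨h0, h1⟩, -⟩
    constructor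
    · intro y; intro z; exact h0 y z
    · intro y; intro z
      calc F y z ≤ ∑ z', F y z' :=
            Finset.single_le_sum (fun z' _ => h0 y z') (Finset.mem_univ z)
        _ = 1 := h1 y
  have hcompact : IsCompact S := (isCompact_Icc).of_isClosed_subset hclosed hsub
  have hSne : S.Nonempty := by
    refine ⟨fun _ z => if z = 0 then 1 else 0, ⟨⟨fun y z => by positivity, fun y => by simp⟩, ?_⟩⟩
    have : privP P (fun (_ : Fin N) (z : Fin (N + 1)) => if z = 0 then (1:ℝ) else 0)
        = pcX P := by
      unfold privP pcX
      rw [Finset.sum_eq_single 0]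
      · simp
      · intro z _ hz
        simp only [if_neg hz, mul_zero, Finset.sum_const_zero, ciSup_const]
      · simp
    rw [this]; exact hε
  obtain ⟨F, hFS, hFmax⟩ := hcompact.exists_isMaxOn hSne hcontU.continuousOn
  refine ⟨F, hFS.1, hFS.2, ⟨⟨N + 1, F, hFS.1, hFS.2, rfl⟩, ?_⟩⟩
  rintro u ⟨K, Q, hQ, hQP, rfl⟩
  rcases Nat.eq_zero_or_pos K with hK | hK
  · subst hK
    have := hQ.2 0
    simp at this
  -- reduction: merge columns by argmax of utility
  have hsel : ∀ z : Fin K, ∃ y : Fin N, ∀ y',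
      (∑ x, P x y') * Q y' z ≤ (∑ x, P x y) * Q y z := by
    intro z
    obtain ⟨y, -, hy⟩ := Finset.exists_max_image Finset.univ
      (fun y => (∑ x, P x y) * Q y z) Finset.univ_nonempty
    exact ⟨y, fun y' => hy y' (Finset.mem_univ y')⟩
  choose g hg using hsel
  classical
  set F' : Fin N → Fin (N + 1) → ℝ := fun y j =>
    ∑ z ∈ Finset.univ.filter (fun z => (g z).castSucc = j), Q y z with hF'
  have hF'stoch : IsStoch F' := by
    constructor
    · intro y j; exact Finset.sum_nonneg fun z _ => hQ.1 y z
    · intro y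
      rw [hF']
      simp only
      rw [Finset.sum_fiberwise Finset.univ (fun z => (g z).castSucc) (fun z => Q y z)]
      exact hQ.2 y
  have hlast : ∀ y, F' y (Fin.last N) = 0 := by
    intro y
    rw [hF']
    simp only
    rw [Finset.filter_false_of_mem, Finset.sum_empty]
    intro z _
    exact (Fin.castSucc_lt_last (g z)).ne
  -- utility preserved
  have hU : privU P F' = privU P Q := by
    unfold privU
    rw [Fin.sum_univ_castSucc]
    have hlast0 : (⨆ y, (∑ x, P x y) * F' y (Fin.last N)) = 0 := by
      simp only [hlast, mul_zero, ciSup_const]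
    rw [hlast0, add_zero]
    rw [← Finset.sum_fiberwise Finset.univ (fun z => g z)
      (fun z => ⨆ y, (∑ x, P x y) * Q y z)]
    apply Finset.sum_congr rfl
    intro j _
    apply le_antisymm
    · apply ciSup_le
      intro y
      rw [hF']
      simp only
      rw [Finset.mul_sum]
      have hfe : Finset.univ.filter (fun z : Fin K => (g z).castSucc = Fin.castSucc j)
          = Finset.univ.filter (fun z => g z = j) := by
        ext z; simp [Fin.castSucc_inj]
      rw [hfe]
      exact Finset.sum_le_sum fun z _ =>
        le_ciSup (bddAbove_range_fin fun y' => (∑ x, P x y') * Q y' z) y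
    · have : ∑ z ∈ Finset.univ.filter (fun z => g z = j),
          (⨆ y, (∑ x, P x y) * Q y z) = (∑ x, P x j) * F' j (Fin.castSucc j) := by
        rw [hF']
        simp only
        rw [Finset.mul_sum]
        have hfe : Finset.univ.filter (fun z : Fin K => (g z).castSucc = Fin.castSucc j)
            = Finset.univ.filter (fun z => g z = j) := by
          ext z; simp [Fin.castSucc_inj]
        rw [hfe]
        apply Finset.sum_congr rfl
        intro z hz
        have hgz : g z = j := (Finset.mem_filter.1 hz).2
        apply le_antisymm
        · apply ciSup_le
          intro y'
          rw [← hgz]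
          exact hg z y'
        · exact le_ciSup (bddAbove_range_fin fun y' => (∑ x, P x y') * Q y' z) j
      rw [this]
      exact le_ciSup (bddAbove_range_fin fun y' => (∑ x, P x y') * F' y' (Fin.castSucc j)) j
  -- privacy bounded
  have hPle : privP P F' ≤ ε := by
    have : privP P F' ≤ privP P Q := by
      unfold privP
      rw [Fin.sum_univ_castSucc]
      have hlast0 : (⨆ x, ∑ y, P x y * F' y (Fin.last N)) = 0 := by
        simp only [hlast, mul_zero, Finset.sum_const_zero, ciSup_const]
      rw [hlast0, add_zero]
      rw [← Finset.sum_fiberwise Finset.univ (fun z => g z)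
        (fun z => ⨆ x, ∑ y, P x y * Q y z)]
      apply Finset.sum_le_sum
      intro j _
      have hrw : ∀ x : Fin M, ∑ y, P x y * F' y (Fin.castSucc j)
          = ∑ z ∈ Finset.univ.filter (fun z => g z = j), ∑ y, P x y * Q y z := by
        intro x
        rw [hF']
        simp only
        have hfe : Finset.univ.filter (fun z : Fin K => (g z).castSucc = Fin.castSucc j)
            = Finset.univ.filter (fun z => g z = j) := by
          ext z; simp [Fin.castSucc_inj]
        simp_rw [hfe, Finset.mul_sum]
        rw [Finset.sum_comm]
      calc (⨆ x, ∑ y, P x y * F' y (Fin.castSucc j))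
          = ⨆ x, ∑ z ∈ Finset.univ.filter (fun z => g z = j), ∑ y, P x y * Q y z := by
            congr 1; funext x; exact hrw x
        _ ≤ _ := ciSup_sum_le _ _
    exact this.trans hQP
  rw [← hU]
  exact hFmax ⟨hF'stoch, hPle⟩
end
end

section
/- The set ℛ := { (𝒫(F), 𝒰(F)) : F ∈ ℱ } ⊆ ℝ² is convex. -/
noncomputable section

namespace RegionConvexAux

open Finset Matrix

variable {M N : ℕ}

def alpha (P : Fin M → Fin N → ℝ) (f : Fin N → ℝ) : ℝ := ⨆ x, ∑ y, P x y * f y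

def beta (P : Fin M → Fin N → ℝ) (f : Fin N → ℝ) : ℝ := ⨆ y, (∑ x, P x y) * f y

def w (P : Fin M → Fin N → ℝ) (f : Fin N → ℝ) : Fin (N + 2) → ℝ :=
  Fin.cons (alpha P f) (Fin.cons (beta P f) f)

def Xv (N : ℕ) (v : ℝ × ℝ) : Fin (N + 2) → ℝ := Fin.cons v.1 (Fin.cons v.2 (fun _ => 1))

def Ach (P : Fin M → Fin N → ℝ) (K : ℕ) (v : ℝ × ℝ) : Prop :=
  ∃ c : Fin K → Fin N → ℝ, (∀ i y, 0 ≤ c i y) ∧ (∑ i, w P (c i)) = Xv N v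

@[simp] lemma w_zero (P : Fin M → Fin N → ℝ) (f : Fin N → ℝ) : w P f 0 = alpha P f := rfl

@[simp] lemma w_one (P : Fin M → Fin N → ℝ) (f : Fin N → ℝ) : w P f (Fin.succ 0) = beta P f := by
  simp [w]

@[simp] lemma w_one' (P : Fin M → Fin N → ℝ) (f : Fin N → ℝ) : w P f 1 = beta P f := by
  rw [← Fin.succ_zero_eq_one]; simp [w]

@[simp] lemma w_ss (P : Fin M → Fin N → ℝ) (f : Fin N → ℝ) (y : Fin N) :
    w P f y.succ.succ = f y := by simp [w]

@[simp] lemma Xv_zero (v : ℝ × ℝ) : Xv N v 0 = v.1 := rfl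
@[simp] lemma Xv_one (v : ℝ × ℝ) : Xv N v (Fin.succ 0) = v.2 := by simp [Xv]
@[simp] lemma Xv_one' (v : ℝ × ℝ) : Xv N v 1 = v.2 := by rw [← Fin.succ_zero_eq_one]; simp [Xv]
@[simp] lemma Xv_ss (v : ℝ × ℝ) (y : Fin N) : Xv N v y.succ.succ = 1 := by simp [Xv]

lemma alpha_smul (P : Fin M → Fin N → ℝ) {t : ℝ} (ht : 0 ≤ t) (f : Fin N → ℝ) :
    alpha P (t • f) = t * alpha P f := by
  unfold alpha
  rw [Real.mul_iSup_of_nonneg ht]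
  congr 1; funext x
  rw [Finset.mul_sum]
  apply Finset.sum_congr rfl
  intro y _
  simp [mul_comm, mul_assoc, mul_left_comm]

lemma beta_smul (P : Fin M → Fin N → ℝ) {t : ℝ} (ht : 0 ≤ t) (f : Fin N → ℝ) :
    beta P (t • f) = t * beta P f := by
  unfold beta
  rw [Real.mul_iSup_of_nonneg ht]
  congr 1; funext y
  simp; ring

lemma w_smul (P : Fin M → Fin N → ℝ) {t : ℝ} (ht : 0 ≤ t) (f : Fin N → ℝ) :
    w P (t • f) = t • w P f := by
  funext r
  induction r using Fin.cases with
  | zero => simp [alpha_smul P ht]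
  | succ r =>
    induction r using Fin.cases with
    | zero => simp [w_one, beta_smul P ht]
    | succ y => simp [w_ss]

lemma alpha_zero (P : Fin M → Fin N → ℝ) (hM : 0 < M) : alpha P 0 = 0 := by
  haveI : Nonempty (Fin M) := ⟨⟨0, hM⟩⟩
  simp [alpha]

lemma beta_zero (P : Fin M → Fin N → ℝ) (hN : 0 < N) : beta P 0 = 0 := by
  haveI : Nonempty (Fin N) := ⟨⟨0, hN⟩⟩
  simp [beta]

lemma w_zero_col (P : Fin M → Fin N → ℝ) (hM : 0 < M) (hN : 0 < N) : w P 0 = 0 := by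
  funext r
  induction r using Fin.cases with
  | zero => simp [alpha_zero P hM]
  | succ r =>
    induction r using Fin.cases with
    | zero => simp [w_one, beta_zero P hN]
    | succ y => simp [w_ss]


/-! ### Continuity helpers -/

lemma continuous_sup' {ι : Type*} (s : Finset ι) (hs : s.Nonempty) {g : ι → ℝ → ℝ}
    (hg : ∀ i, Continuous (g i)) : Continuous fun u => s.sup' hs fun i => g i u := by
  induction hs using Finset.Nonempty.cons_induction with
  | singleton a =>
    have : (fun u => ({a} : Finset ι).sup' (Finset.singleton_nonempty a) fun i => g i u)
        = g a := by funext u; simp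
    rw [this]; exact hg a
  | cons a s ha hs ih =>
    have : (fun u => (Finset.cons a s ha).sup' (Finset.cons_nonempty ha) fun i => g i u)
        = fun u => g a u ⊔ s.sup' hs fun i => g i u := by
      funext u; exact Finset.sup'_cons (f := fun i => g i u) hs
    rw [this]; exact (hg a).max ih

lemma continuous_ciSup {m : ℕ} (hm : 0 < m) {g : Fin m → ℝ → ℝ}
    (hg : ∀ i, Continuous (g i)) : Continuous fun u => ⨆ i, g i u := by
  haveI : Nonempty (Fin m) := ⟨⟨0, hm⟩⟩
  simp only [← Finset.sup'_univ_eq_ciSup]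
  exact continuous_sup' _ _ hg

/-- The segment path between two columns. -/
def seg (f₀ f₁ : Fin N → ℝ) (u : ℝ) : Fin N → ℝ := (1 - u) • f₀ + u • f₁

lemma seg_apply (f₀ f₁ : Fin N → ℝ) (u : ℝ) (y : Fin N) :
    seg f₀ f₁ u y = (1 - u) * f₀ y + u * f₁ y := rfl

lemma seg_zero (f₀ f₁ : Fin N → ℝ) : seg f₀ f₁ 0 = f₀ := by
  funext y; simp [seg_apply]

lemma seg_one (f₀ f₁ : Fin N → ℝ) : seg f₀ f₁ 1 = f₁ := by
  funext y; simp [seg_apply]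

lemma seg_nonneg {f₀ f₁ : Fin N → ℝ} (h₀ : ∀ y, 0 ≤ f₀ y) (h₁ : ∀ y, 0 ≤ f₁ y)
    {u : ℝ} (hu : u ∈ Set.Icc (0:ℝ) 1) (y : Fin N) : 0 ≤ seg f₀ f₁ u y := by
  have := hu.1; have := hu.2
  have := h₀ y; have := h₁ y
  rw [seg_apply]; nlinarith

lemma continuous_w_seg (P : Fin M → Fin N → ℝ) (hM : 0 < M) (hN : 0 < N)
    (f₀ f₁ : Fin N → ℝ) (r : Fin (N + 2)) :
    Continuous fun u => w P (seg f₀ f₁ u) r := by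
  have hcoord : ∀ y : Fin N, Continuous fun u => seg f₀ f₁ u y := by
    intro y
    simp only [seg_apply]
    continuity
  induction r using Fin.cases with
  | zero =>
    simp only [w_zero, alpha]
    apply continuous_ciSup hM
    intro x
    apply continuous_finset_sum
    intro y _
    exact continuous_const.mul (hcoord y)
  | succ r =>
    induction r using Fin.cases with
    | zero =>
      simp only [w_one, beta]
      apply continuous_ciSup hN
      intro y
      exact continuous_const.mul (hcoord y)
    | succ y => simp only [w_ss]; exact hcoord y

/-! ### The sliding lemma -/

lemma slide_core {K : ℕ} {E : Type*} [AddCommGroup E] [Module ℝ E]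
    (V : Fin K → E) (X : E) (μ t : Fin K → ℝ) (hμ : ∀ i, 0 ≤ μ i)
    (heq : ∑ i, μ i • V i = X) (ht0 : ∑ i, t i • V i = 0)
    (htpos : ∃ i, 0 < t i) :
    ∃ μ' : Fin K → ℝ, (∀ i, 0 ≤ μ' i) ∧ (∃ j, μ' j = 0) ∧ ∑ i, μ' i • V i = X := by
  classical
  obtain ⟨i₀, hi₀⟩ := htpos
  set S : Finset (Fin K) := Finset.univ.filter (fun i => 0 < t i) with hS
  have hSne : S.Nonempty := ⟨i₀, by simp [hS, hi₀]⟩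
  obtain ⟨j, hjS, hjmin⟩ := S.exists_min_image (fun i => μ i / t i) hSne
  have htj : 0 < t j := by simpa [hS] using hjS
  set s : ℝ := μ j / t j with hs
  have hs0 : 0 ≤ s := div_nonneg (hμ j) htj.le
  refine ⟨fun i => μ i - s * t i, ?_, ⟨j, by show μ j - s * t j = 0; rw [hs, div_mul_cancel₀ _ htj.ne', sub_self]⟩, ?_⟩
  · intro i
    simp only
    by_cases hti : 0 < t i
    · have hmin : s ≤ μ i / t i := hjmin i (by simp [hS, hti])
      have := (le_div_iff₀ hti).mp hmin
      linarith
    · push_neg at hti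
      have : s * t i ≤ 0 := mul_nonpos_of_nonneg_of_nonpos hs0 hti
      have := hμ i
      linarith
  · have : ∑ i, (μ i - s * t i) • V i
        = (∑ i, μ i • V i) - s • ∑ i, t i • V i := by
      rw [Finset.smul_sum, ← Finset.sum_sub_distrib]
      apply Finset.sum_congr rfl
      intro i _
      rw [sub_smul, smul_smul]
    rw [this, heq, ht0, smul_zero, sub_zero]

lemma slide {K : ℕ} {E : Type*} [AddCommGroup E] [Module ℝ E]
    (V : Fin K → E) (X : E) (μ t : Fin K → ℝ) (hμ : ∀ i, 0 ≤ μ i)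
    (heq : ∑ i, μ i • V i = X) (ht0 : ∑ i, t i • V i = 0)
    (htne : ∃ i, t i ≠ 0) :
    ∃ μ' : Fin K → ℝ, (∀ i, 0 ≤ μ' i) ∧ (∃ j, μ' j = 0) ∧ ∑ i, μ' i • V i = X := by
  obtain ⟨i₀, hi₀⟩ := htne
  rcases lt_or_gt_of_ne hi₀ with h | h
  · refine slide_core V X μ (fun i => -t i) hμ heq ?_ ⟨i₀, by show 0 < -t i₀; linarith⟩
    have : ∑ i, (-t i) • V i = -∑ i, t i • V i := by
      rw [← Finset.sum_neg_distrib]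
      exact Finset.sum_congr rfl fun i _ => neg_smul _ _
    rw [this, ht0, neg_zero]
  · exact slide_core V X μ t hμ heq ht0 ⟨i₀, h⟩

/-! ### Collapse: from a representation with a vanishing coefficient -/

lemma collapse (P : Fin M → Fin N → ℝ) {K : ℕ} (v : ℝ × ℝ)
    (c : Fin (K + 1) → Fin N → ℝ) (hc : ∀ i y, 0 ≤ c i y)
    (μ : Fin (K + 1) → ℝ) (hμ : ∀ i, 0 ≤ μ i) (j : Fin (K + 1)) (hj : μ j = 0)
    (heq : ∑ i, μ i • w P (c i) = Xv N v) : Ach P K v := by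
  refine ⟨fun z => μ (j.succAbove z) • c (j.succAbove z), ?_, ?_⟩
  · intro z y
    have := hμ (j.succAbove z)
    have := hc (j.succAbove z) y
    simp only [Pi.smul_apply, smul_eq_mul]
    positivity
  · have hw : ∀ z, w P (μ (j.succAbove z) • c (j.succAbove z))
        = μ (j.succAbove z) • w P (c (j.succAbove z)) := fun z =>
      w_smul P (hμ _) _
    calc ∑ z, w P (μ (j.succAbove z) • c (j.succAbove z))
        = ∑ z, μ (j.succAbove z) • w P (c (j.succAbove z)) := by
          exact Finset.sum_congr rfl fun z _ => hw z
      _ = ∑ i, μ i • w P (c i) := by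
          rw [Fin.sum_univ_succAbove (fun i => μ i • w P (c i)) j, hj, zero_smul, zero_add]
      _ = Xv N v := heq

/-! ### Lemma A : purely linear reduction for many columns -/

lemma achA (P : Fin M → Fin N → ℝ) {K : ℕ} (v : ℝ × ℝ) (hK : N + 2 ≤ K)
    (h : Ach P (K + 1) v) : Ach P K v := by
  obtain ⟨c, hc, hsum⟩ := h
  set V : Fin (K + 1) → (Fin (N + 2) → ℝ) := fun i => w P (c i) with hV
  have hnli : ¬ LinearIndependent ℝ V := by
    intro hli
    have := hli.fintype_card_le_finrank
    rw [Module.finrank_fintype_fun_eq_card, Fintype.card_fin, Fintype.card_fin] at this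
    omega
  obtain ⟨g, hg0, i, hgi⟩ := Fintype.not_linearIndependent_iff.mp hnli
  have heq1 : ∑ i, (1:ℝ) • V i = Xv N v := by simpa using hsum
  obtain ⟨μ', hμ'0, ⟨j, hj⟩, hμ'eq⟩ :=
    slide V (Xv N v) (fun _ => 1) g (fun _ => zero_le_one) heq1 hg0 ⟨i, hgi⟩
  exact collapse P v c hc μ' hμ'0 j hj hμ'eq


/-! ### Evaluation helpers -/

lemma eval_ss (P : Fin M → Fin N → ℝ) {K : ℕ} {μ : Fin K → ℝ} {d : Fin K → Fin N → ℝ}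
    {v : ℝ × ℝ} (heq : ∑ i, μ i • w P (d i) = Xv N v) (y : Fin N) :
    ∑ i, μ i * d i y = 1 := by
  have h := congrFun heq y.succ.succ
  simp only [Finset.sum_apply, Pi.smul_apply, smul_eq_mul, w_ss, Xv_ss] at h
  exact h

/-! ### Lemma B : reduction from `N+2` to `N+1` columns -/

lemma achB (P : Fin M → Fin N → ℝ) (hM : 0 < M) (hN : 0 < N) (v : ℝ × ℝ)
    (h : Ach P (N + 2) v) : Ach P (N + 1) v := by
  classical
  obtain ⟨c, hc, hsum⟩ := h
  by_cases hzero : ∃ i, c i = 0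
  · -- a zero column can be dropped directly
    obtain ⟨i, hi⟩ := hzero
    refine collapse P v c hc (fun k => if k = i then 0 else 1)
      (fun k => by by_cases hk : k = i <;> simp [hk]) i (by simp) ?_
    have hterm : ∀ k, (if k = i then (0:ℝ) else 1) • w P (c k)
        = w P (c k) - (if k = i then w P (c k) else 0) := by
      intro k; by_cases hk : k = i <;> simp [hk]
    rw [Finset.sum_congr rfl fun k _ => hterm k, Finset.sum_sub_distrib,
      Finset.sum_ite_eq' Finset.univ i (fun k => w P (c k))]
    simp only [Finset.mem_univ, if_true, hi, w_zero_col P hM hN, hsum, sub_zero]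
  push_neg at hzero
  have hpos : ∀ i, ∃ y, 0 < c i y := by
    intro i
    by_contra hcon; push_neg at hcon
    exact hzero i (funext fun y => le_antisymm (hcon y) (hc i y))
  choose ys hys using hpos
  set sg : ℝ → Fin N → ℝ := seg (c 0) (c 1) with hsg
  set Cc : ℝ → Fin (N + 2) → Fin N → ℝ := fun u => Function.update c 0 (sg u) with hCc
  set V : ℝ → Fin (N + 2) → Fin (N + 2) → ℝ := fun u i => w P (Cc u i) with hV
  have hCc0 : Cc 0 = c := by
    rw [hCc]; simp only [hsg, seg_zero]; exact Function.update_eq_self 0 c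
  have hCc_at0 : ∀ u, Cc u 0 = sg u := fun u => Function.update_self _ _ _
  have hCc_ne : ∀ u, ∀ i : Fin (N + 2), i ≠ 0 → Cc u i = c i := fun u i hi =>
    Function.update_of_ne hi _ _
  have hCcnn : ∀ u ∈ Set.Icc (0:ℝ) 1, ∀ i y, 0 ≤ Cc u i y := by
    intro u hu i y
    by_cases hi : i = 0
    · rw [hi, hCc_at0]; exact seg_nonneg (hc 0) (hc 1) hu y
    · rw [hCc_ne u i hi]; exact hc i y
  haveI : Nonempty (Fin (N + 2)) := ⟨0⟩
  set B : ℝ := max (max (2 / c 0 (ys 0)) (2 / c 1 (ys 1)))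
      (max (Finset.univ.sup' Finset.univ_nonempty fun i : Fin (N+2) => 1 / c i (ys i)) 1)
    with hB
  have hB1 : (1:ℝ) ≤ B := le_max_of_le_right (le_max_right _ _)
  -- a priori bound on any nonnegative solution
  have hbound : ∀ u ∈ Set.Icc (0:ℝ) 1, ∀ μ : Fin (N+2) → ℝ, (∀ i, 0 ≤ μ i) →
      (∑ i, μ i • V u i = Xv N v) → ∀ i, μ i ≤ B := by
    intro u hu μ hμ heq i
    have key : ∀ y, μ i * Cc u i y ≤ 1 := by
      intro y
      have e3 := eval_ss P heq y
      calc μ i * Cc u i y ≤ ∑ k, μ k * Cc u k y :=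
            Finset.single_le_sum (f := fun k => μ k * Cc u k y)
              (fun k _ => mul_nonneg (hμ k) (hCcnn u hu k y)) (Finset.mem_univ i)
        _ = 1 := e3
    by_cases hi : i = 0
    · subst hi
      rcases le_total u (1/2) with hu2 | hu2
      · have h2 : c 0 (ys 0) / 2 ≤ Cc u 0 (ys 0) := by
          rw [hCc_at0, hsg, seg_apply]
          nlinarith [hc 1 (ys 0), hys 0, hu.1, hu.2]
        have hk := key (ys 0)
        have : μ 0 ≤ 2 / c 0 (ys 0) := by
          rw [le_div_iff₀ (hys 0)]
          nlinarith [mul_le_mul_of_nonneg_left h2 (hμ 0), hμ 0]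
        exact this.trans (le_max_of_le_left (le_max_left _ _))
      · have h2 : c 1 (ys 1) / 2 ≤ Cc u 0 (ys 1) := by
          rw [hCc_at0, hsg, seg_apply]
          nlinarith [hc 0 (ys 1), hys 1, hu.1, hu.2]
        have hk := key (ys 1)
        have : μ 0 ≤ 2 / c 1 (ys 1) := by
          rw [le_div_iff₀ (hys 1)]
          nlinarith [mul_le_mul_of_nonneg_left h2 (hμ 0), hμ 0]
        exact this.trans (le_max_of_le_left (le_max_right _ _))
    · have hk := key (ys i)
      rw [hCc_ne u i hi] at hk
      have : μ i ≤ 1 / c i (ys i) := by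
        rw [le_div_iff₀ (hys i)]; linarith
      refine this.trans (le_max_of_le_right (le_max_of_le_left ?_))
      exact Finset.le_sup' (fun k : Fin (N+2) => 1 / c k (ys k)) (Finset.mem_univ i)
  -- continuity of the moving column of values
  have hVcont : ∀ i, Continuous fun u : ℝ => V u i := by
    intro i
    by_cases hi : i = 0
    · subst hi
      have : (fun u : ℝ => V u 0) = fun u => w P (sg u) := by
        funext u; rw [hV]; simp only; rw [hCc_at0]
      rw [this, hsg]
      exact continuous_pi fun r => continuous_w_seg P hM hN (c 0) (c 1) r
    · have : (fun u : ℝ => V u i) = fun _ => w P (c i) := by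
        funext u; rw [hV]; simp only; rw [hCc_ne u i hi]
      rw [this]; exact continuous_const
  -- the feasible-time set
  set T : Set (ℝ × (Fin (N+2) → ℝ)) :=
    {p | p.1 ∈ Set.Icc (0:ℝ) 1 ∧ (∀ i, p.2 i ∈ Set.Icc (0:ℝ) B) ∧
      ∑ i, p.2 i • V p.1 i = Xv N v} with hT
  have hΦ : Continuous fun p : ℝ × (Fin (N+2) → ℝ) => ∑ i, p.2 i • V p.1 i := by
    apply continuous_finset_sum
    intro i _
    exact (((continuous_apply i).comp continuous_snd)).smul ((hVcont i).comp continuous_fst)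
  have hTclosed : IsClosed T := by
    rw [hT, Set.setOf_and, Set.setOf_and]
    apply IsClosed.inter
    · exact isClosed_Icc.preimage continuous_fst
    apply IsClosed.inter
    · rw [Set.setOf_forall]
      refine isClosed_iInter fun i => ?_
      exact isClosed_Icc.preimage ((continuous_apply i).comp continuous_snd)
    · exact isClosed_eq hΦ continuous_const
  have hbox : IsCompact ((Set.Icc (0:ℝ) 1) ×ˢ
      (Set.pi Set.univ fun _ : Fin (N+2) => Set.Icc (0:ℝ) B)) :=
    (isCompact_Icc (a := (0:ℝ)) (b := 1)).prod
      (isCompact_univ_pi fun _ : Fin (N+2) => isCompact_Icc (a := (0:ℝ)) (b := B))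
  have hTcomp : IsCompact T := by
    refine IsCompact.of_isClosed_subset hbox hTclosed ?_
    rintro ⟨u, μ⟩ ⟨h1, h2, -⟩
    exact ⟨h1, fun i _ => h2 i⟩
  set U : Set ℝ := Prod.fst '' T with hU
  have hUcomp : IsCompact U := hTcomp.image continuous_fst
  have hUne : U.Nonempty := by
    refine ⟨0, ⟨0, fun _ => 1⟩, ⟨⟨le_refl _, zero_le_one⟩, fun i => ⟨zero_le_one, hB1⟩, ?_⟩, rfl⟩
    simp only [one_smul, hV, hCc0]
    exact hsum
  have hustar := hUcomp.sSup_mem hUne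
  obtain ⟨p, ⟨hpIcc, hpB, heq⟩, hp1⟩ := hustar
  have hμnn : ∀ i, 0 ≤ p.2 i := fun i => (hpB i).1
  have hub : ∀ x ∈ U, x ≤ p.1 := by
    intro x hx; rw [hp1]; exact le_csSup hUcomp.bddAbove hx
  by_cases hzeroμ : ∃ j, p.2 j = 0
  · obtain ⟨j, hj⟩ := hzeroμ
    exact collapse P v (Cc p.1) (hCcnn p.1 hpIcc) p.2 hμnn j hj heq
  push_neg at hzeroμ
  have hμpos : ∀ i, 0 < p.2 i := fun i => lt_of_le_of_ne (hμnn i) (Ne.symm (hzeroμ i))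
  by_cases hu1 : p.1 = 1
  · -- at the endpoint the moving column coincides with column 1 : merge them
    set t : Fin (N+2) → ℝ := fun k => (if k = 0 then (1:ℝ) else 0) - (if k = 1 then 1 else 0)
      with ht
    have hV01 : V p.1 0 = V p.1 1 := by
      rw [hV]; simp only
      rw [hCc_at0, hCc_ne p.1 1 (Ne.symm (zero_ne_one)), hu1, hsg, seg_one]
    have ht0 : ∑ k, t k • V p.1 k = 0 := by
      have hterm : ∀ k, t k • V p.1 k
          = (if k = 0 then V p.1 k else 0) - (if k = 1 then V p.1 k else 0) := by
        intro k
        rw [ht]; simp only [sub_smul, ite_smul, one_smul, zero_smul]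
      rw [Finset.sum_congr rfl fun k _ => hterm k, Finset.sum_sub_distrib,
        Finset.sum_ite_eq' Finset.univ (0 : Fin (N+2)) (fun k => V p.1 k),
        Finset.sum_ite_eq' Finset.univ (1 : Fin (N+2)) (fun k => V p.1 k)]
      simp [hV01]
    have htne : ∃ k, t k ≠ 0 := by
      refine ⟨0, ?_⟩
      rw [ht]
      simp [(zero_ne_one (α := Fin (N+2)))]
    obtain ⟨μ', hμ'0, ⟨j, hj⟩, hμ'eq⟩ := slide (V p.1) (Xv N v) p.2 t hμnn heq ht0 htne
    exact collapse P v (Cc p.1) (hCcnn p.1 hpIcc) μ' hμ'0 j hj hμ'eq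
  have hult : p.1 < 1 := lt_of_le_of_ne hpIcc.2 hu1
  -- matrix of the value-vectors
  set Mx : ℝ → Matrix (Fin (N+2)) (Fin (N+2)) ℝ := fun u => Matrix.of fun r i => V u i r
    with hMx
  have hMv : ∀ (u : ℝ) (ν : Fin (N+2) → ℝ), Mx u *ᵥ ν = ∑ i, ν i • V u i := by
    intro u ν
    funext r
    rw [Matrix.mulVec, dotProduct]
    simp only [Finset.sum_apply, Pi.smul_apply, smul_eq_mul, hMx, Matrix.of_apply]
    exact Finset.sum_congr rfl fun i _ => mul_comm _ _
  have hMcont : Continuous Mx := by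
    apply continuous_matrix
    intro r i
    exact (continuous_apply r).comp (hVcont i)
  by_cases hdet : (Mx p.1).det = 0
  · obtain ⟨tv, htvne, htv0⟩ := Matrix.exists_mulVec_eq_zero_iff.mpr hdet
    have ht0 : ∑ i, tv i • V p.1 i = 0 := by rw [← hMv]; exact htv0
    obtain ⟨μ', hμ'0, ⟨j, hj⟩, hμ'eq⟩ := slide (V p.1) (Xv N v) p.2 tv hμnn heq ht0
      (Function.ne_iff.mp htvne)
    exact collapse P v (Cc p.1) (hCcnn p.1 hpIcc) μ' hμ'0 j hj hμ'eq
  · -- nondegenerate case : slide the endpoint further right, contradiction with sSup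
    set φ : ℝ → Fin (N+2) → ℝ := fun u => (Mx u)⁻¹ *ᵥ Xv N v with hφ
    have hμeqM : Mx p.1 *ᵥ p.2 = Xv N v := by rw [hMv]; exact heq
    have hφeq : φ p.1 = p.2 := by
      rw [hφ]; simp only
      rw [← hμeqM, Matrix.mulVec_mulVec, Matrix.nonsing_inv_mul _ (isUnit_iff_ne_zero.mpr hdet),
        Matrix.one_mulVec]
    have hinv : ContinuousAt (fun u => (Mx u)⁻¹) p.1 := by
      refine ContinuousAt.comp ?_ hMcont.continuousAt
      refine continuousAt_matrix_inv _ ?_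
      rw [Ring.inverse_eq_inv']
      exact continuousAt_inv₀ hdet
    have hψ : ContinuousAt φ p.1 := by
      rw [hφ]
      exact ContinuousAt.comp
        ((continuous_id.matrix_mulVec continuous_const).continuousAt) hinv
    have hφcont : ∀ i, ContinuousAt (fun u => φ u i) p.1 := fun i =>
      ((continuous_apply i).continuousAt).comp hψ
    have hev1 : ∀ᶠ u in nhds p.1, (Mx u).det ≠ 0 :=
      (hMcont.matrix_det.continuousAt).eventually_ne hdet
    have hev2 : ∀ᶠ u in nhds p.1, ∀ i, 0 < φ u i := by
      rw [Filter.eventually_all]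
      intro i
      have hpos : 0 < φ p.1 i := by rw [hφeq]; exact hμpos i
      exact (hφcont i) (Ioi_mem_nhds hpos)
    have hev : ∀ᶠ u in nhdsWithin p.1 (Set.Ioi p.1),
        ((Mx u).det ≠ 0 ∧ ∀ i, 0 < φ u i) := (hev1.and hev2).filter_mono nhdsWithin_le_nhds
    have hIoo : Set.Ioo p.1 1 ∈ nhdsWithin p.1 (Set.Ioi p.1) :=
      Ioo_mem_nhdsGT_of_mem ⟨le_refl _, hult⟩
    obtain ⟨u', ⟨hdet', hφpos⟩, hu'Ioo⟩ :=
      (hev.and (Filter.eventually_of_mem hIoo fun x hx => hx)).exists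
    have hu'Icc : u' ∈ Set.Icc (0:ℝ) 1 :=
      ⟨le_trans hpIcc.1 hu'Ioo.1.le, hu'Ioo.2.le⟩
    have heq' : ∑ i, φ u' i • V u' i = Xv N v := by
      rw [← hMv, hφ]
      simp only
      rw [Matrix.mulVec_mulVec, Matrix.mul_nonsing_inv _ (isUnit_iff_ne_zero.mpr hdet'),
        Matrix.one_mulVec]
    have hmem : u' ∈ U := by
      refine ⟨⟨u', φ u'⟩, ⟨hu'Icc, fun i => ⟨(hφpos i).le, ?_⟩, heq'⟩, rfl⟩
      exact hbound u' hu'Icc (φ u') (fun k => (hφpos k).le) heq' i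
    exact absurd (hub u' hmem) (not_le.mpr hu'Ioo.1)


/-! ### Reduction chain -/

lemma achDown (P : Fin M → Fin N → ℝ) (hM : 0 < M) (hN : 0 < N) (v : ℝ × ℝ) :
    ∀ K, Ach P (N + 1 + K) v → Ach P (N + 1) v := by
  intro K
  induction K with
  | zero => exact id
  | succ K ih =>
    intro h
    cases K with
    | zero => exact achB P hM hN v h
    | succ K' => exact ih (achA P v (by omega) h)

/-! ### Bridge to the region -/

lemma sum_w_filter (P : Fin M → Fin N → ℝ) {F : Fin N → Fin (N + 1) → ℝ} (hF : IsStoch F) :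
    ∑ z, w P (fun y => F y z) = Xv N (privP P F, privU P F) := by
  funext r
  rw [Finset.sum_apply]
  induction r using Fin.cases with
  | zero => simp only [w_zero, Xv_zero]; rfl
  | succ r =>
    induction r using Fin.cases with
    | zero =>
      have h1 : ∀ z, w P (fun y => F y z) (Fin.succ 0) = beta P (fun y => F y z) :=
        fun z => w_one P _
      rw [Finset.sum_congr rfl fun z _ => h1 z, Xv_one]
      rfl
    | succ y =>
      have h1 : ∀ z, w P (fun y' => F y' z) (Fin.succ (Fin.succ y)) = F y z :=
        fun z => w_ss P _ y
      rw [Finset.sum_congr rfl fun z _ => h1 z, Xv_ss]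
      exact hF.2 y

lemma filter_of_ach (P : Fin M → Fin N → ℝ) {v : ℝ × ℝ} (h : Ach P (N + 1) v) :
    ∃ F ∈ filtSet N, (privP P F, privU P F) = v := by
  obtain ⟨c, hc, hsum⟩ := h
  refine ⟨fun y z => c z y, ?_, ?_⟩
  · exact ⟨fun y z => hc z y, fun y => by
      have := congrFun hsum y.succ.succ
      simpa [Finset.sum_apply] using this⟩
  · have h0 := congrFun hsum 0
    have h1 := congrFun hsum (Fin.succ 0)
    rw [Finset.sum_apply] at h0 h1
    simp only [w_zero, Xv_zero] at h0
    have h1' : ∑ z, beta P (c z) = v.2 := by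
      rw [← Xv_one (N := N) v, ← h1]
      exact Finset.sum_congr rfl fun z _ => (w_one P _).symm
    refine Prod.ext ?_ ?_
    · exact h0
    · exact h1'

lemma ach_combo (P : Fin M → Fin N → ℝ) {F₁ F₂ : Fin N → Fin (N + 1) → ℝ}
    (h₁ : IsStoch F₁) (h₂ : IsStoch F₂) {a b : ℝ} (ha : 0 ≤ a) (hb : 0 ≤ b)
    (hab : a + b = 1) :
    Ach P (N + 1 + (N + 1))
      (a • (privP P F₁, privU P F₁) + b • (privP P F₂, privU P F₂)) := by
  refine ⟨Fin.append (fun z : Fin (N+1) => a • fun y => F₁ y z)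
      (fun z : Fin (N+1) => b • fun y => F₂ y z), ?_, ?_⟩
  · intro i y
    induction i using Fin.addCases with
    | left z =>
      rw [Fin.append_left]
      exact mul_nonneg ha (h₁.1 y z)
    | right z =>
      rw [Fin.append_right]
      exact mul_nonneg hb (h₂.1 y z)
  · rw [Fin.sum_univ_add]
    have hl : ∀ z : Fin (N+1),
        w P (Fin.append (fun z : Fin (N+1) => a • fun y => F₁ y z)
          (fun z : Fin (N+1) => b • fun y => F₂ y z) (Fin.castAdd (N+1) z))
        = a • w P (fun y => F₁ y z) := by
      intro z; rw [Fin.append_left]; exact w_smul P ha _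
    have hr : ∀ z : Fin (N+1),
        w P (Fin.append (fun z : Fin (N+1) => a • fun y => F₁ y z)
          (fun z : Fin (N+1) => b • fun y => F₂ y z) (Fin.natAdd (N+1) z))
        = b • w P (fun y => F₂ y z) := by
      intro z; rw [Fin.append_right]; exact w_smul P hb _
    rw [Finset.sum_congr rfl fun z _ => hl z, Finset.sum_congr rfl fun z _ => hr z,
      ← Finset.smul_sum, ← Finset.smul_sum, sum_w_filter P h₁, sum_w_filter P h₂]
    funext r
    induction r using Fin.cases with
    | zero => simp
    | succ r =>
      induction r using Fin.cases with
      | zero => simp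
      | succ y => simp [hab]

end RegionConvexAux

/-- The set `ℛ = { (𝒫(F), 𝒰(F)) : F ∈ ℱ } ⊆ ℝ²` is convex. -/
theorem region_convex {M N : ℕ} (hM : 0 < M) (hN : 0 < N)
    (P : Fin M → Fin N → ℝ) (hP : IsPmf P) :
    Convex ℝ {x : ℝ × ℝ | ∃ F ∈ filtSet N, (privP P F, privU P F) = x} := by
  intro p hp q hq a b ha hb hab
  obtain ⟨F₁, hF₁, hpeq⟩ := hp
  obtain ⟨F₂, hF₂, hqeq⟩ := hq
  have hach : RegionConvexAux.Ach P (N + 1) (a • p + b • q) := by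
    apply RegionConvexAux.achDown P hM hN _ (N + 1)
    rw [← hpeq, ← hqeq]
    exact RegionConvexAux.ach_combo P hF₁ hF₂ ha hb hab
  exact RegionConvexAux.filter_of_ach P hach
end
end

section
/- The map ε ↦ h(P_{XY}, ε) is concave on the interval [P_c(X), P_c(X|Y)]. -/
noncomputable section

namespace HFunAux

variable {M N : ℕ}

/-- `φ(c) = max_x Σ_y P(x,y) c(y)`. -/
def phi (P : Fin M → Fin N → ℝ) (c : Fin N → ℝ) : ℝ := ⨆ x, ∑ y, P x y * c y

/-- `ψ(c) = max_y P_Y(y) c(y)`. -/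
def psi (P : Fin M → Fin N → ℝ) (c : Fin N → ℝ) : ℝ := ⨆ y, (∑ x, P x y) * c y

variable (P : Fin M → Fin N → ℝ)

lemma privP_eq {k : ℕ} (F : Fin N → Fin k → ℝ) :
    privP P F = ∑ z, phi P (fun y => F y z) := rfl

lemma privU_eq {k : ℕ} (F : Fin N → Fin k → ℝ) :
    privU P F = ∑ z, psi P (fun y => F y z) := rfl

lemma le_phi (c : Fin N → ℝ) (x : Fin M) : ∑ y, P x y * c y ≤ phi P c :=
  le_ciSup (f := fun x => ∑ y, P x y * c y)
    (Set.Finite.bddAbove (Set.finite_range _)) x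

lemma phi_le {c : Fin N → ℝ} {t : ℝ} (hM : 0 < M)
    (h : ∀ x, ∑ y, P x y * c y ≤ t) : phi P c ≤ t := by
  haveI : Nonempty (Fin M) := Fin.pos_iff_nonempty.mp hM
  exact ciSup_le h

lemma le_psi (c : Fin N → ℝ) (y : Fin N) : (∑ x, P x y) * c y ≤ psi P c :=
  le_ciSup (f := fun y => (∑ x, P x y) * c y)
    (Set.Finite.bddAbove (Set.finite_range _)) y

lemma psi_le {c : Fin N → ℝ} {t : ℝ} (hN : 0 < N)
    (h : ∀ y, (∑ x, P x y) * c y ≤ t) : psi P c ≤ t := by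
  haveI : Nonempty (Fin N) := Fin.pos_iff_nonempty.mp hN
  exact ciSup_le h

lemma phi_zero (hM : 0 < M) : phi P (fun _ => 0) = 0 := by
  haveI : Nonempty (Fin M) := Fin.pos_iff_nonempty.mp hM
  simp [phi]

lemma phi_add (hM : 0 < M) (c d : Fin N → ℝ) :
    phi P (fun y => c y + d y) ≤ phi P c + phi P d := by
  refine phi_le P hM fun x => ?_
  have h1 : ∑ y, P x y * c y ≤ phi P c := le_phi P c x
  have h2 : ∑ y, P x y * d y ≤ phi P d := le_phi P d x
  calc ∑ y, P x y * (c y + d y) = (∑ y, P x y * c y) + ∑ y, P x y * d y := by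
        rw [← Finset.sum_add_distrib]; exact Finset.sum_congr rfl fun y _ => by ring
    _ ≤ _ := add_le_add h1 h2

lemma phi_sum (hM : 0 < M) {ι : Type*} (s : Finset ι) (c : ι → Fin N → ℝ) :
    phi P (fun y => ∑ w ∈ s, c w y) ≤ ∑ w ∈ s, phi P (c w) := by
  classical
  induction s using Finset.induction_on with
  | empty => simp [phi_zero P hM]
  | insert w s hw ih =>
    simp only [Finset.sum_insert hw]
    exact (phi_add P hM _ _).trans (by linarith)

lemma phi_smul (hM : 0 < M) (a : ℝ) (ha : 0 ≤ a) (c : Fin N → ℝ) :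
    phi P (fun y => a * c y) = a * phi P c := by
  haveI : Nonempty (Fin M) := Fin.pos_iff_nonempty.mp hM
  rw [phi, phi, Real.mul_iSup_of_nonneg ha]
  refine iSup_congr fun x => ?_
  rw [Finset.mul_sum]
  exact Finset.sum_congr rfl fun y _ => by ring

lemma psi_smul (hN : 0 < N) (a : ℝ) (ha : 0 ≤ a) (c : Fin N → ℝ) :
    psi P (fun y => a * c y) = a * psi P c := by
  haveI : Nonempty (Fin N) := Fin.pos_iff_nonempty.mp hN
  rw [psi, psi, Real.mul_iSup_of_nonneg ha]
  exact iSup_congr fun y => by ring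

/-- ψ is additive over a family of columns sharing a common argmax `y₀`. -/
lemma psi_sum_eq (hN : 0 < N) {ι : Type*} (s : Finset ι) (c : ι → Fin N → ℝ) (y₀ : Fin N)
    (hmax : ∀ w ∈ s, ∀ y, (∑ x, P x y) * c w y ≤ (∑ x, P x y₀) * c w y₀) :
    psi P (fun y => ∑ w ∈ s, c w y) = ∑ w ∈ s, psi P (c w) := by
  haveI : Nonempty (Fin N) := Fin.pos_iff_nonempty.mp hN
  have hpsi : ∀ w ∈ s, psi P (c w) = (∑ x, P x y₀) * c w y₀ := fun w hw =>
    le_antisymm (psi_le P hN (hmax w hw)) (le_psi P (c w) y₀)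
  have hL : psi P (fun y => ∑ w ∈ s, c w y) = (∑ x, P x y₀) * ∑ w ∈ s, c w y₀ := by
    refine le_antisymm (psi_le P hN fun y => ?_) (le_psi P (fun y => ∑ w ∈ s, c w y) y₀)
    rw [Finset.mul_sum, Finset.mul_sum]
    exact Finset.sum_le_sum fun w hw => hmax w hw y
  rw [hL, Finset.mul_sum]
  exact Finset.sum_congr rfl fun w hw => (hpsi w hw).symm

/-- Any finite family of nonnegative "columns" summing to the all-ones vector can be
merged into a filter with `N+1` outputs, without changing `Σψ` and not increasing `Σφ`. -/
lemma reduce (hM : 0 < M) (hN : 0 < N) {ι : Type*} [Fintype ι] (c : ι → Fin N → ℝ)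
    (hc0 : ∀ w y, 0 ≤ c w y) (hc1 : ∀ y, ∑ w, c w y = 1) :
    ∃ G ∈ filtSet N, privP P G ≤ (∑ w, phi P (c w)) ∧ privU P G = ∑ w, psi P (c w) := by
  classical
  haveI : Nonempty (Fin N) := Fin.pos_iff_nonempty.mp hN
  have hex : ∀ w : ι, ∃ y₀ : Fin N, ∀ y, (∑ x, P x y) * c w y ≤ (∑ x, P x y₀) * c w y₀ :=
    fun w => Finite.exists_max _
  choose a ha using hex
  set G : Fin N → Fin (N + 1) → ℝ :=
    fun y z => ∑ w ∈ Finset.univ.filter (fun w => Fin.castSucc (a w) = z), c w y with hG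
  have hfib : ∀ (f : ι → ℝ),
      (∑ z : Fin (N + 1), ∑ w ∈ Finset.univ.filter (fun w => Fin.castSucc (a w) = z), f w)
        = ∑ w, f w := fun f =>
    Finset.sum_fiberwise_of_maps_to (fun w _ => Finset.mem_univ _) f
  refine ⟨G, ⟨fun y z => Finset.sum_nonneg fun w _ => hc0 w y, fun y => ?_⟩, ?_, ?_⟩
  · rw [hG]; exact (hfib (fun w => c w y)).trans (hc1 y)
  · rw [privP_eq]
    calc ∑ z, phi P (fun y => G y z)
        ≤ ∑ z : Fin (N + 1), ∑ w ∈ Finset.univ.filter (fun w => Fin.castSucc (a w) = z),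
            phi P (c w) := Finset.sum_le_sum fun z _ => phi_sum P hM _ c
      _ = ∑ w, phi P (c w) := hfib _
  · rw [privU_eq]
    calc ∑ z, psi P (fun y => G y z)
        = ∑ z : Fin (N + 1), ∑ w ∈ Finset.univ.filter (fun w => Fin.castSucc (a w) = z),
            psi P (c w) := by
          refine Finset.sum_congr rfl fun z _ => ?_
          by_cases hne : (Finset.univ.filter (fun w => Fin.castSucc (a w) = z)).Nonempty
          · obtain ⟨w₀, hw₀⟩ := hne
            have hzw₀ : Fin.castSucc (a w₀) = z := (Finset.mem_filter.mp hw₀).2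
            refine psi_sum_eq P hN _ c (a w₀) fun w hw y => ?_
            have : a w = a w₀ := by
              have hz : Fin.castSucc (a w) = z := (Finset.mem_filter.mp hw).2
              exact Fin.castSucc_injective N (hz.trans hzw₀.symm)
            rw [← this]; exact ha w y
          · have hemp := Finset.not_nonempty_iff_eq_empty.mp hne
            simp [psi, hG, hemp]
      _ = ∑ w, psi P (c w) := hfib _

end HFunAux

open HFunAux in
/-- The map `ε ↦ h(P_{XY}, ε)` is concave on the interval `[P_c(X), P_c(X|Y)]`. -/
theorem hFun_concave {M N : ℕ} (hM : 0 < M) (hN : 0 < N)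
    (P : Fin M → Fin N → ℝ) (hP : IsPmf P) :
    ConcaveOn ℝ (Set.Icc (pcX P) (pcXgY P)) (hFun P) := by
  classical
  haveI : Nonempty (Fin M) := Fin.pos_iff_nonempty.mp hM
  haveI : Nonempty (Fin N) := Fin.pos_iff_nonempty.mp hN
  set S : ℝ → Set ℝ := fun ε => {u | ∃ F ∈ filtSet N, privP P F ≤ ε ∧ privU P F = u} with hS
  have hQ0 : ∀ y, 0 ≤ ∑ x, P x y := fun y => Finset.sum_nonneg fun x _ => hP.1 x y
  -- boundedness
  have hbdd : ∀ ε, BddAbove (S ε) := by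
    intro ε
    refine ⟨1, fun u hu => ?_⟩
    obtain ⟨F, hF, _, hu⟩ := hu
    rw [← hu, privU]
    calc ∑ z, ⨆ y, (∑ x, P x y) * F y z
        ≤ ∑ z, ∑ y, (∑ x, P x y) * F y z := by
          refine Finset.sum_le_sum fun z _ => ciSup_le fun y => ?_
          exact Finset.single_le_sum (f := fun y => (∑ x, P x y) * F y z)
            (fun y' _ => mul_nonneg (hQ0 y') (hF.1 y' z)) (Finset.mem_univ y)
      _ = ∑ y, (∑ x, P x y) * ∑ z, F y z := by
          rw [Finset.sum_comm]
          exact Finset.sum_congr rfl fun y _ => (Finset.mul_sum _ _ _).symm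
      _ = 1 := by
          simp only [hF.2, mul_one]
          rw [Finset.sum_comm]; exact hP.2
  -- nonemptiness for ε ≥ pcX
  have hne : ∀ ε, pcX P ≤ ε → (S ε).Nonempty := by
    intro ε hε
    set F0 : Fin N → Fin (N + 1) → ℝ := fun _ z => if z = 0 then 1 else 0 with hF0
    have hstoch : F0 ∈ filtSet N := by
      constructor
      · intro y z; by_cases h : z = 0 <;> simp [hF0, h]
      · intro y; simp [hF0]
    have hpriv : privP P F0 = pcX P := by
      rw [privP]
      have hterm : ∀ z : Fin (N + 1),
          (⨆ x, ∑ y, P x y * F0 y z) = if z = 0 then pcX P else 0 := by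
        intro z
        by_cases h : z = 0 <;> simp [hF0, h, pcX]
      rw [Finset.sum_congr rfl fun z _ => hterm z]
      simp
    exact ⟨privU P F0, F0, hstoch, hpriv ▸ hε, rfl⟩
  refine ⟨convex_Icc _ _, ?_⟩
  rintro ε₁ ⟨hε₁, -⟩ ε₂ ⟨hε₂, -⟩ a b ha hb hab
  simp only [smul_eq_mul]
  -- key combination step
  have key : ∀ u₁ ∈ S ε₁, ∀ u₂ ∈ S ε₂, a * u₁ + b * u₂ ∈ S (a * ε₁ + b * ε₂) := by
    rintro u₁ ⟨F₁, hF₁, hP₁, hU₁⟩ u₂ ⟨F₂, hF₂, hP₂, hU₂⟩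
    set c : Fin (N + 1) ⊕ Fin (N + 1) → Fin N → ℝ :=
      Sum.elim (fun z y => a * F₁ y z) (fun z y => b * F₂ y z) with hc
    have hc0 : ∀ w y, 0 ≤ c w y := by
      rintro (z | z) y
      · exact mul_nonneg ha (hF₁.1 y z)
      · exact mul_nonneg hb (hF₂.1 y z)
    have hc1 : ∀ y, ∑ w, c w y = 1 := by
      intro y
      rw [Fintype.sum_sum_type]
      simp only [hc, Sum.elim_inl, Sum.elim_inr]
      rw [← Finset.mul_sum, ← Finset.mul_sum, hF₁.2 y, hF₂.2 y, mul_one, mul_one, hab]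
    obtain ⟨G, hG, hGP, hGU⟩ := reduce P hM hN c hc0 hc1
    have hphi : (∑ w, phi P (c w)) = a * privP P F₁ + b * privP P F₂ := by
      rw [Fintype.sum_sum_type]
      simp only [hc, Sum.elim_inl, Sum.elim_inr]
      rw [privP_eq, privP_eq, Finset.mul_sum, Finset.mul_sum]
      congr 1
      · exact Finset.sum_congr rfl fun z _ => phi_smul P hM a ha _
      · exact Finset.sum_congr rfl fun z _ => phi_smul P hM b hb _
    have hpsi : (∑ w, psi P (c w)) = a * privU P F₁ + b * privU P F₂ := by
      rw [Fintype.sum_sum_type]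
      simp only [hc, Sum.elim_inl, Sum.elim_inr]
      rw [privU_eq, privU_eq, Finset.mul_sum, Finset.mul_sum]
      congr 1
      · exact Finset.sum_congr rfl fun z _ => psi_smul P hN a ha _
      · exact Finset.sum_congr rfl fun z _ => psi_smul P hN b hb _
    refine ⟨G, hG, ?_, ?_⟩
    · refine hGP.trans ?_
      rw [hphi]
      have := mul_le_mul_of_nonneg_left hP₁ ha
      have := mul_le_mul_of_nonneg_left hP₂ hb
      linarith
    · rw [hGU, hpsi, hU₁, hU₂]
  -- conclude with sSup juggling
  have hTle : ∀ u₁ ∈ S ε₁, ∀ u₂ ∈ S ε₂, a * u₁ + b * u₂ ≤ hFun P (a * ε₁ + b * ε₂) :=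
    fun u₁ h₁ u₂ h₂ => le_csSup (hbdd _) (key u₁ h₁ u₂ h₂)
  rcases eq_or_lt_of_le ha with rfl | ha'
  · -- a = 0
    have hb1 : b = 1 := by linarith
    subst hb1
    simp only [zero_mul, zero_add, one_mul, hFun, le_refl]
  rcases eq_or_lt_of_le hb with rfl | hb'
  · have ha1 : a = 1 := by linarith
    subst ha1
    simp only [zero_mul, add_zero, one_mul, hFun, le_refl]
  -- a, b > 0
  have h1 : hFun P ε₁ ≤ (hFun P (a * ε₁ + b * ε₂) - b * hFun P ε₂) / a := by
    refine csSup_le (hne ε₁ hε₁) fun u₁ h₁ => ?_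
    rw [le_div_iff₀ ha']
    have h2 : hFun P ε₂ ≤ (hFun P (a * ε₁ + b * ε₂) - a * u₁) / b := by
      refine csSup_le (hne ε₂ hε₂) fun u₂ h₂ => ?_
      rw [le_div_iff₀ hb']
      have := hTle u₁ h₁ u₂ h₂
      linarith
    rw [le_div_iff₀ hb'] at h2
    linarith
  rw [le_div_iff₀ ha'] at h1
  have : hFun P ε₁ = sSup (S ε₁) := rfl
  linarith
end
end

section
/- If P_c(X) < P_c(X|Y), the map ε ↦ h(P_{XY}, ε) is strictly increasing and continuous on the interval [P_c(X), P_c(X|Y)]. -/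
set_option linter.unusedSectionVars false
set_option linter.unusedVariables false
set_option maxHeartbeats 1000000

noncomputable section

def hSet {M N : ℕ} (P : Fin M → Fin N → ℝ) (ε : ℝ) : Set ℝ :=
  {u | ∃ F ∈ filtSet N, privP P F ≤ ε ∧ privU P F = u}

def Efilt (N : ℕ) : Fin N → Fin (N + 1) → ℝ := fun _ z => if z = Fin.last N then 1 else 0

section Helpers
variable {ι : Type*} [Fintype ι] [Nonempty ι]
lemma le_isup (f : ι → ℝ) (i : ι) : f i ≤ ⨆ j, f j :=
  le_ciSup (Set.Finite.bddAbove (Set.finite_range f)) i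
lemma isup_le {f : ι → ℝ} {c : ℝ} (h : ∀ i, f i ≤ c) : (⨆ i, f i) ≤ c := ciSup_le h
lemma isup_nonneg {f : ι → ℝ} (h : ∀ i, 0 ≤ f i) : 0 ≤ ⨆ i, f i :=
  le_trans (h (Classical.arbitrary ι)) (le_isup f _)
lemma isup_le_sum {f : ι → ℝ} (h : ∀ i, 0 ≤ f i) : (⨆ i, f i) ≤ ∑ i, f i :=
  isup_le fun i => Finset.single_le_sum (fun j _ => h j) (Finset.mem_univ i)
lemma exists_isup_eq (f : ι → ℝ) : ∃ i, f i = ⨆ j, f j := exists_eq_ciSup_of_finite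

open Filter Topology in
lemma tendsto_isup {f : ℕ → ι → ℝ} {g : ι → ℝ}
    (h : ∀ i, Filter.Tendsto (fun n => f n i) Filter.atTop (nhds (g i))) :
    Filter.Tendsto (fun n => ⨆ i, f n i) Filter.atTop (nhds (⨆ i, g i)) := by
  have := Filter.Tendsto.finset_sup'_nhds_apply (s := Finset.univ) (f := fun i n => f n i)
    (g := g) (l := Filter.atTop) Finset.univ_nonempty (fun i _ => h i)
  simpa [Finset.sup'_univ_eq_ciSup] using this
end Helpers

open Filter Topology

section Main
variable {M N : ℕ} (hM : 0 < M) (hN : 0 < N) (P : Fin M → Fin N → ℝ) (hP : IsPmf P)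
include hM hN hP

lemma sum_q : ∑ y, ∑ x, P x y = 1 := by rw [Finset.sum_comm]; exact hP.2

lemma q_nonneg (y : Fin N) : 0 ≤ ∑ x, P x y :=
  Finset.sum_nonneg fun x _ => hP.1 x y

lemma m_le_q (y : Fin N) : (⨆ x, P x y) ≤ ∑ x, P x y := by
  haveI : Nonempty (Fin M) := Fin.pos_iff_nonempty.mp hM
  exact isup_le_sum fun x => hP.1 x y

lemma privU_le_one {k : ℕ} (F : Fin N → Fin k → ℝ) (hF : IsStoch F) :
    privU P F ≤ 1 := by
  haveI : Nonempty (Fin N) := Fin.pos_iff_nonempty.mp hN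
  calc privU P F ≤ ∑ z, ∑ y, (∑ x, P x y) * F y z := by
        refine Finset.sum_le_sum fun z _ => isup_le_sum fun y =>
          mul_nonneg (q_nonneg hM hN P hP y) (hF.1 y z)
    _ = ∑ y, (∑ x, P x y) * ∑ z, F y z := by
        rw [Finset.sum_comm]; exact Finset.sum_congr rfl fun y _ => (Finset.mul_sum _ _ _).symm
    _ = 1 := by simp only [hF.2, mul_one]; exact sum_q hM hN P hP

lemma privU_nonneg {k : ℕ} (hk : 0 < k) (F : Fin N → Fin k → ℝ) (hF : IsStoch F) :
    0 ≤ privU P F := by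
  haveI : Nonempty (Fin N) := Fin.pos_iff_nonempty.mp hN
  exact Finset.sum_nonneg fun z _ => isup_nonneg fun y =>
    mul_nonneg (q_nonneg hM hN P hP y) (hF.1 y z)

/-- The key upper bound: `privU F ≤ 1 - pcXgY + privP F`. -/
lemma privU_le_privP {k : ℕ} (F : Fin N → Fin k → ℝ) (hF : IsStoch F) :
    privU P F ≤ 1 - pcXgY P + privP P F := by
  haveI : Nonempty (Fin M) := Fin.pos_iff_nonempty.mp hM
  haveI : Nonempty (Fin N) := Fin.pos_iff_nonempty.mp hN
  -- choose per-column argmax y_z of q_y F(y,z)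
  choose yz hyz using fun z : Fin k => exists_isup_eq (fun y => (∑ x, P x y) * F y z)
  -- choose argmax x of P x (yz z)
  choose xz hxz using fun z : Fin k => exists_isup_eq (fun x => P x (yz z))
  have key : ∀ z : Fin k,
      (⨆ y, (∑ x, P x y) * F y z) + ∑ y, (⨆ x, P x y) * F y z
        ≤ (⨆ x, ∑ y, P x y * F y z) + ∑ y, (∑ x, P x y) * F y z := by
    intro z
    have h1 : (⨆ x, P x (yz z)) * F (yz z) z ≤ ⨆ x, ∑ y, P x y * F y z := by
      refine le_trans ?_ (le_isup _ (xz z))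
      rw [← hxz z]
      exact Finset.single_le_sum (f := fun y => P (xz z) y * F y z)
        (fun y _ => mul_nonneg (hP.1 _ _) (hF.1 _ _)) (Finset.mem_univ (yz z))
    have h2 : ∑ y ∈ Finset.univ \ {yz z}, (⨆ x, P x y) * F y z
        ≤ ∑ y ∈ Finset.univ \ {yz z}, (∑ x, P x y) * F y z :=
      Finset.sum_le_sum fun y _ =>
        mul_le_mul_of_nonneg_right (m_le_q hM hN P hP y) (hF.1 y z)
    have e1 : ∑ y, (⨆ x, P x y) * F y z
        = (⨆ x, P x (yz z)) * F (yz z) z + ∑ y ∈ Finset.univ \ {yz z}, (⨆ x, P x y) * F y z := by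
      rw [add_comm, Finset.sum_sdiff_eq_sub (Finset.subset_univ _), Finset.sum_singleton]; ring
    have e2 : ∑ y, (∑ x, P x y) * F y z
        = (∑ x, P x (yz z)) * F (yz z) z + ∑ y ∈ Finset.univ \ {yz z}, (∑ x, P x y) * F y z := by
      rw [add_comm, Finset.sum_sdiff_eq_sub (Finset.subset_univ _), Finset.sum_singleton]; ring
    rw [e1, e2, ← hyz z]
    linarith [h1, h2]
  have sum_key := Finset.sum_le_sum fun z (_ : z ∈ Finset.univ) => key z
  rw [Finset.sum_add_distrib, Finset.sum_add_distrib] at sum_key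
  have eU : ∑ z : Fin k, ∑ y, (∑ x, P x y) * F y z = 1 := by
    rw [Finset.sum_comm]
    calc ∑ y, ∑ z, (∑ x, P x y) * F y z = ∑ y, (∑ x, P x y) * ∑ z, F y z := by
          exact Finset.sum_congr rfl fun y _ => (Finset.mul_sum _ _ _).symm
      _ = 1 := by simp only [hF.2, mul_one]; exact sum_q hM hN P hP
  have eB : ∑ z : Fin k, ∑ y, (⨆ x, P x y) * F y z = pcXgY P := by
    rw [Finset.sum_comm, pcXgY]
    refine Finset.sum_congr rfl fun y _ => ?_
    rw [← Finset.mul_sum, hF.2, mul_one]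
  rw [eU, eB] at sum_key
  have : privU P F + pcXgY P ≤ privP P F + 1 := sum_key
  linarith

lemma Efilt_stoch : IsStoch (Efilt N) := by
  constructor
  · intro y z; unfold Efilt; split <;> norm_num
  · intro y; unfold Efilt; simp

lemma privP_Efilt : privP P (Efilt N) = pcX P := by
  haveI : Nonempty (Fin M) := Fin.pos_iff_nonempty.mp hM
  unfold privP Efilt
  rw [Fin.sum_univ_castSucc]
  have h1 : ∀ z : Fin N, (⨆ x, ∑ y, P x y * (if Fin.castSucc z = Fin.last N then 1 else 0)) = 0 := by
    intro z
    have : (Fin.castSucc z : Fin (N+1)) ≠ Fin.last N := Fin.castSucc_lt_last z |>.ne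
    simp [this]
  simp only [h1, Finset.sum_const, smul_zero, zero_add]
  simp [pcX]

/-- Mixing with the erasure filter. -/
lemma mix_erasure (F : Fin N → Fin (N+1) → ℝ) (hF : IsStoch F) {t : ℝ} (ht0 : 0 ≤ t) (ht1 : t ≤ 1) :
    IsStoch (fun y z => (1-t) * F y z + t * Efilt N y z) ∧
    privP P (fun y z => (1-t) * F y z + t * Efilt N y z) ≤ (1-t) * privP P F + t * pcX P ∧
    (1-t) * privU P F ≤ privU P (fun y z => (1-t) * F y z + t * Efilt N y z) := by
  haveI : Nonempty (Fin M) := Fin.pos_iff_nonempty.mp hM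
  haveI : Nonempty (Fin N) := Fin.pos_iff_nonempty.mp hN
  have hE := Efilt_stoch hM hN P hP
  refine ⟨⟨fun y z => add_nonneg (mul_nonneg (by linarith) (hF.1 y z))
      (mul_nonneg ht0 (hE.1 y z)), fun y => ?_⟩, ?_, ?_⟩
  · rw [Finset.sum_add_distrib, ← Finset.mul_sum, ← Finset.mul_sum, hF.2, hE.2]; ring
  · rw [← privP_Efilt hM hN P hP]
    unfold privP
    rw [Finset.mul_sum, Finset.mul_sum, ← Finset.sum_add_distrib]
    refine Finset.sum_le_sum fun z _ => isup_le fun x => ?_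
    have e : ∑ y, P x y * ((1-t) * F y z + t * Efilt N y z)
        = (1-t) * ∑ y, P x y * F y z + t * ∑ y, P x y * Efilt N y z := by
      rw [Finset.mul_sum, Finset.mul_sum, ← Finset.sum_add_distrib]
      exact Finset.sum_congr rfl fun y _ => by ring
    rw [e]
    exact add_le_add (mul_le_mul_of_nonneg_left (le_isup (fun x' => ∑ y, P x' y * F y z) x) (by linarith))
      (mul_le_mul_of_nonneg_left (le_isup (fun x' => ∑ y, P x' y * Efilt N y z) x) ht0)
  · unfold privU
    rw [Finset.mul_sum]
    refine Finset.sum_le_sum fun z _ => ?_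
    obtain ⟨y0, hy0⟩ := exists_isup_eq (fun y => (∑ x, P x y) * F y z)
    rw [← hy0]
    refine le_trans ?_ (le_isup (fun y => (∑ x, P x y) * ((1-t) * F y z + t * Efilt N y z)) y0)
    have hq : 0 ≤ ∑ x, P x y0 := Finset.sum_nonneg fun x _ => hP.1 x y0
    have hE0 : 0 ≤ Efilt N y0 z := hE.1 y0 z
    nlinarith [mul_nonneg hq hE0]

/-- Identity-merge construction: mix a column-merged version of `F` with the identity. -/
lemma mix_identity (F : Fin N → Fin (N+1) → ℝ) (hF : IsStoch F) {α : ℝ}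
    (hα0 : 0 ≤ α) (hα1 : α ≤ 1) :
    ∃ G : Fin N → Fin (N+1) → ℝ, IsStoch G ∧
      privP P G ≤ (1-α) * privP P F + α * pcXgY P ∧
      (1-α) * privU P F + α ≤ privU P G := by
  haveI : Nonempty (Fin M) := Fin.pos_iff_nonempty.mp hM
  haveI : Nonempty (Fin N) := Fin.pos_iff_nonempty.mp hN
  choose τ hτ using fun z : Fin (N+1) => exists_isup_eq (fun y => (∑ x, P x y) * F y z)
  set G : Fin N → Fin (N+1) → ℝ := fun y z =>
    (1-α) * (∑ z0 ∈ Finset.univ.filter (fun z0 => Fin.castSucc (τ z0) = z), F y z0)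
    + α * (if z = Fin.castSucc y then 1 else 0) with hG
  have fiber_sum : ∀ f : Fin (N+1) → ℝ,
      ∑ z : Fin (N+1), ∑ z0 ∈ Finset.univ.filter (fun z0 => Fin.castSucc (τ z0) = z), f z0
        = ∑ z0, f z0 := fun f =>
    Finset.sum_fiberwise_of_maps_to (fun x _ => Finset.mem_univ _) f
  have fiber_sum' : ∀ f : Fin (N+1) → ℝ,
      ∑ y' : Fin N, ∑ z0 ∈ Finset.univ.filter
          (fun z0 => Fin.castSucc (τ z0) = Fin.castSucc y'), f z0 = ∑ z0, f z0 := by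
    intro f
    have : ∀ y' : Fin N, Finset.univ.filter
        (fun z0 => Fin.castSucc (τ z0) = Fin.castSucc y')
          = Finset.univ.filter (fun z0 => τ z0 = y') := by
      intro y'
      refine Finset.filter_congr fun z0 _ => ?_
      constructor
      · exact fun h => Fin.castSucc_injective _ h
      · exact fun h => by rw [h]
    rw [Finset.sum_congr rfl fun y' _ => by rw [this y']]
    exact Finset.sum_fiberwise_of_maps_to (fun x _ => Finset.mem_univ _) f
  have hGstoch : IsStoch G := by
    constructor
    · intro y z
      refine add_nonneg (mul_nonneg (by linarith)
        (Finset.sum_nonneg fun z0 _ => hF.1 y z0)) (mul_nonneg hα0 ?_)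
      split <;> norm_num
    · intro y
      simp only [hG]
      rw [Finset.sum_add_distrib, ← Finset.mul_sum, ← Finset.mul_sum,
        fiber_sum (F y), hF.2 y]
      have : ∑ z : Fin (N+1), (if z = Fin.castSucc y then (1:ℝ) else 0) = 1 := by
        rw [Finset.sum_ite_eq' Finset.univ (Fin.castSucc y)]
        simp
      rw [this]; ring
  refine ⟨G, hGstoch, ?_, ?_⟩
  · -- privP bound
    unfold privP
    have perz : ∀ z : Fin (N+1),
        (⨆ x, ∑ y, P x y * G y z)
          ≤ (1-α) * (∑ z0 ∈ Finset.univ.filter (fun z0 => Fin.castSucc (τ z0) = z),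
              ⨆ x, ∑ y, P x y * F y z0)
            + α * (∑ y, (⨆ x, P x y) * (if z = Fin.castSucc y then 1 else 0)) := by
      intro z
      refine isup_le fun x => ?_
      have e : ∑ y, P x y * G y z
          = (1-α) * (∑ z0 ∈ Finset.univ.filter (fun z0 => Fin.castSucc (τ z0) = z),
              ∑ y, P x y * F y z0)
            + α * (∑ y, P x y * (if z = Fin.castSucc y then 1 else 0)) := by
        calc ∑ y, P x y * G y z
            = ∑ y, ((1-α) * (P x y * ∑ z0 ∈ Finset.univ.filter
                (fun z0 => Fin.castSucc (τ z0) = z), F y z0)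
              + α * (P x y * (if z = Fin.castSucc y then 1 else 0))) := by
              refine Finset.sum_congr rfl fun y _ => ?_
              simp only [hG]; ring
          _ = (1-α) * (∑ y, ∑ z0 ∈ Finset.univ.filter
                (fun z0 => Fin.castSucc (τ z0) = z), P x y * F y z0)
              + α * (∑ y, P x y * (if z = Fin.castSucc y then 1 else 0)) := by
              rw [Finset.sum_add_distrib, ← Finset.mul_sum, ← Finset.mul_sum]
              congr 2
              exact Finset.sum_congr rfl fun y _ => Finset.mul_sum _ _ _
          _ = _ := by rw [Finset.sum_comm]
      rw [e]
      refine add_le_add (mul_le_mul_of_nonneg_left ?_ (by linarith))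
        (mul_le_mul_of_nonneg_left ?_ hα0)
      · exact Finset.sum_le_sum fun z0 _ => le_isup (fun x' => ∑ y, P x' y * F y z0) x
      · refine Finset.sum_le_sum fun y _ => mul_le_mul_of_nonneg_right
          (le_isup (fun x' => P x' y) x) (by split <;> norm_num)
    calc ∑ z, ⨆ x, ∑ y, P x y * G y z
        ≤ ∑ z : Fin (N+1), ((1-α) * (∑ z0 ∈ Finset.univ.filter
            (fun z0 => Fin.castSucc (τ z0) = z), ⨆ x, ∑ y, P x y * F y z0)
            + α * (∑ y, (⨆ x, P x y) * (if z = Fin.castSucc y then 1 else 0))) :=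
          Finset.sum_le_sum fun z _ => perz z
      _ = (1-α) * privP P F + α * pcXgY P := by
          rw [Finset.sum_add_distrib, ← Finset.mul_sum, ← Finset.mul_sum,
            fiber_sum (fun z0 => ⨆ x, ∑ y, P x y * F y z0)]
          have : ∑ z : Fin (N+1), ∑ y, (⨆ x, P x y) * (if z = Fin.castSucc y then 1 else 0)
              = pcXgY P := by
            rw [Finset.sum_comm, pcXgY]
            refine Finset.sum_congr rfl fun y _ => ?_
            rw [← Finset.mul_sum]
            have : ∑ z : Fin (N+1), (if z = Fin.castSucc y then (1:ℝ) else 0) = 1 := by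
              rw [Finset.sum_ite_eq' Finset.univ (Fin.castSucc y)]; simp
            rw [this, mul_one]
          rw [this]
          rfl
  · -- privU bound
    have expand : privU P G
        = (∑ y' : Fin N, ⨆ y, (∑ x, P x y) * G y (Fin.castSucc y'))
          + ⨆ y, (∑ x, P x y) * G y (Fin.last N) := by
      unfold privU; exact Fin.sum_univ_castSucc _
    rw [expand]
    have nonneg_last : 0 ≤ ⨆ y, (∑ x, P x y) * G y (Fin.last N) :=
      isup_nonneg fun y => mul_nonneg (Finset.sum_nonneg fun x _ => hP.1 x y)
        (hGstoch.1 y (Fin.last N))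
    have step : ∀ y' : Fin N,
        (1-α) * (∑ z0 ∈ Finset.univ.filter
            (fun z0 => Fin.castSucc (τ z0) = Fin.castSucc y'),
          ⨆ y, (∑ x, P x y) * F y z0) + α * (∑ x, P x y')
          ≤ ⨆ y, (∑ x, P x y) * G y (Fin.castSucc y') := by
      intro y'
      refine le_trans ?_ (le_isup (fun y => (∑ x, P x y) * G y (Fin.castSucc y')) y')
      have e : (∑ x, P x y') * G y' (Fin.castSucc y')
          = (1-α) * (∑ z0 ∈ Finset.univ.filter
              (fun z0 => Fin.castSucc (τ z0) = Fin.castSucc y'),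
              (∑ x, P x y') * F y' z0) + α * (∑ x, P x y') := by
        simp only [hG, eq_self_iff_true, if_true, if_pos rfl, ← Finset.mul_sum]
        ring
      rw [e]
      have : ∀ z0 ∈ Finset.univ.filter
          (fun z0 => Fin.castSucc (τ z0) = Fin.castSucc y'),
          (⨆ y, (∑ x, P x y) * F y z0) = (∑ x, P x y') * F y' z0 := by
        intro z0 hz0
        have h2 : τ z0 = y' := Fin.castSucc_injective _ (Finset.mem_filter.mp hz0).2
        rw [← h2, hτ z0]
      rw [Finset.sum_congr rfl this]
    calc ((1-α) * privU P F + α)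
        = ∑ y' : Fin N, ((1-α) * (∑ z0 ∈ Finset.univ.filter
            (fun z0 => Fin.castSucc (τ z0) = Fin.castSucc y'),
            ⨆ y, (∑ x, P x y) * F y z0)
            + α * (∑ x, P x y')) := by
          rw [Finset.sum_add_distrib, ← Finset.mul_sum, ← Finset.mul_sum,
            fiber_sum' (fun z0 => ⨆ y, (∑ x, P x y) * F y z0)]
          have h1 : ∑ y : Fin N, ∑ x, P x y = 1 := by rw [Finset.sum_comm]; exact hP.2
          rw [h1, mul_one]
          rfl
      _ ≤ ∑ y' : Fin N, ⨆ y, (∑ x, P x y) * G y (Fin.castSucc y') :=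
          Finset.sum_le_sum fun y' _ => step y'
      _ ≤ _ := le_add_of_nonneg_right nonneg_last

omit hM hN hP in
lemma hFun_eq_sSup (ε : ℝ) : hFun P ε = sSup (hSet P ε) := rfl

lemma hSet_nonempty {ε : ℝ} (hε : pcX P ≤ ε) : (hSet P ε).Nonempty :=
  ⟨privU P (Efilt N), Efilt N, (Efilt_stoch hM hN P hP), by rw [privP_Efilt hM hN P hP]; exact hε, rfl⟩

lemma hSet_bdd (ε : ℝ) : BddAbove (hSet P ε) := by
  refine ⟨1, fun u hu => ?_⟩
  obtain ⟨F, hF, _, rfl⟩ := hu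
  exact privU_le_one hM hN P hP F hF

lemma hFun_mono {ε1 ε2 : ℝ} (h1 : pcX P ≤ ε1) (h12 : ε1 ≤ ε2) : hFun P ε1 ≤ hFun P ε2 := by
  refine csSup_le_csSup (hSet_bdd hM hN P hP ε2) (hSet_nonempty hM hN P hP h1) ?_
  rintro u ⟨F, hF, hp, rfl⟩
  exact ⟨F, hF, le_trans hp h12, rfl⟩

lemma hFun_le_linear {ε : ℝ} (hε : pcX P ≤ ε) : hFun P ε ≤ 1 - pcXgY P + ε := by
  refine csSup_le (hSet_nonempty hM hN P hP hε) ?_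
  rintro u ⟨F, hF, hp, rfl⟩
  exact le_trans (privU_le_privP hM hN P hP F hF) (by linarith)

lemma hFun_strict_step {ε1 ε2 : ℝ} (h1 : pcX P ≤ ε1) (h12 : ε1 < ε2) (h2 : ε2 ≤ pcXgY P) :
    hFun P ε1 + (ε2 - ε1) ≤ hFun P ε2 := by
  have hb1 : 0 < pcXgY P - ε1 := by linarith
  set α : ℝ := (ε2 - ε1) / (pcXgY P - ε1) with hα
  have hα0 : 0 ≤ α := div_nonneg (by linarith) (by linarith)
  have hα1 : α ≤ 1 := by rw [hα, div_le_one hb1]; linarith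
  have key : ∀ u ∈ hSet P ε1, u ≤ hFun P ε2 - (ε2 - ε1) := by
    rintro u ⟨F, hF, hp, rfl⟩
    obtain ⟨G, hG, hGp, hGu⟩ := mix_identity hM hN P hP F hF hα0 hα1
    have hu_le : privU P F ≤ 1 - pcXgY P + ε1 :=
      le_trans (privU_le_privP hM hN P hP F hF) (by linarith)
    have hGp' : privP P G ≤ ε2 := by
      have : (1-α) * privP P F + α * pcXgY P ≤ (1-α) * ε1 + α * pcXgY P := by nlinarith
      have e : (1-α) * ε1 + α * pcXgY P = ε2 := by
        rw [hα]; field_simp; try ring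
      linarith
    have hGu' : privU P F + (ε2 - ε1) ≤ privU P G := by
      have e : α * (pcXgY P - ε1) = ε2 - ε1 := by rw [hα]; field_simp; try ring
      nlinarith
    have : privU P G ≤ hFun P ε2 :=
      le_csSup (hSet_bdd hM hN P hP ε2) ⟨G, hG, hGp', rfl⟩
    linarith
  have := csSup_le (hSet_nonempty hM hN P hP h1) key
  have h := this
  rw [hFun_eq_sSup]
  linarith [h]

lemma hFun_lip_step {ε1 ε2 : ℝ} (h1 : pcX P ≤ ε1) (h12 : ε1 ≤ ε2) (h2 : pcX P < ε2) :
    hFun P ε2 ≤ hFun P ε1 + (ε2 - ε1) / (ε2 - pcX P) := by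
  have hb : 0 < ε2 - pcX P := by linarith
  set t : ℝ := (ε2 - ε1) / (ε2 - pcX P) with hT
  have ht0 : 0 ≤ t := div_nonneg (by linarith) (by linarith)
  have ht1 : t ≤ 1 := by rw [hT, div_le_one hb]; linarith
  refine csSup_le (hSet_nonempty hM hN P hP (le_trans h1 h12)) ?_
  rintro u ⟨F, hF, hp, rfl⟩
  obtain ⟨hG, hGp, hGu⟩ := mix_erasure hM hN P hP F hF ht0 ht1
  have hGp' : privP P (fun y z => (1-t) * F y z + t * Efilt N y z) ≤ ε1 := by
    have e : (1-t) * ε2 + t * pcX P = ε1 := by rw [hT]; field_simp; ring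
    have : (1-t) * privP P F + t * pcX P ≤ (1-t) * ε2 + t * pcX P := by nlinarith
    linarith
  have hle : privU P (fun y z => (1-t) * F y z + t * Efilt N y z) ≤ hFun P ε1 :=
    le_csSup (hSet_bdd hM hN P hP ε1) ⟨_, hG, hGp', rfl⟩
  have hu1 : privU P F ≤ 1 := privU_le_one hM hN P hP F hF
  nlinarith

include hM hN hP in
lemma tendsto_privP {k : ℕ} {F : ℕ → Fin N → Fin k → ℝ} {L : Fin N → Fin k → ℝ}
    (h : Tendsto F atTop (𝓝 L)) :
    Tendsto (fun n => privP P (F n)) atTop (𝓝 (privP P L)) := by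
  haveI : Nonempty (Fin M) := Fin.pos_iff_nonempty.mp hM
  have hyz : ∀ y z, Tendsto (fun n => F n y z) atTop (𝓝 (L y z)) := by
    intro y z
    have h1 := tendsto_pi_nhds.mp h y
    exact tendsto_pi_nhds.mp h1 z
  unfold privP
  refine tendsto_finset_sum _ fun z _ => tendsto_isup fun x => ?_
  exact tendsto_finset_sum _ fun y _ => (hyz y z).const_mul (P x y)

include hM hN hP in
lemma tendsto_privU {k : ℕ} {F : ℕ → Fin N → Fin k → ℝ} {L : Fin N → Fin k → ℝ}
    (h : Tendsto F atTop (𝓝 L)) :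
    Tendsto (fun n => privU P (F n)) atTop (𝓝 (privU P L)) := by
  haveI : Nonempty (Fin N) := Fin.pos_iff_nonempty.mp hN
  have hyz : ∀ y z, Tendsto (fun n => F n y z) atTop (𝓝 (L y z)) := by
    intro y z
    have h1 := tendsto_pi_nhds.mp h y
    exact tendsto_pi_nhds.mp h1 z
  unfold privU
  refine tendsto_finset_sum _ fun z _ => tendsto_isup fun y => ?_
  exact (hyz y z).const_mul _

include hM hN hP in
/-- right-continuity at `pcX P` : approximate values of `hFun` near `pcX` collapse to `hFun (pcX)`. -/
lemma hFun_right_cont (δ : ℝ) (hδ : 0 < δ) :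
    ∃ ε, pcX P < ε ∧ hFun P ε ≤ hFun P (pcX P) + δ := by
  by_contra hcon
  push_neg at hcon
  -- extract near-optimal filters
  have exF : ∀ n : ℕ, ∃ F : Fin N → Fin (N+1) → ℝ, IsStoch F ∧
      privP P F ≤ pcX P + 1/(n+1) ∧ hFun P (pcX P) + δ < privU P F := by
    intro n
    have hpos : (0:ℝ) < 1/(n+1) := by positivity
    have h1 : pcX P < pcX P + 1/(n+1) := by linarith
    have h2 := hcon (pcX P + 1/(n+1)) h1
    have h3 : hFun P (pcX P) + δ < sSup (hSet P (pcX P + 1/(n+1))) := h2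
    obtain ⟨u, hu, hlt⟩ := exists_lt_of_lt_csSup
      (hSet_nonempty hM hN P hP (le_of_lt h1)) h3
    obtain ⟨F, hF, hp, rfl⟩ := hu
    exact ⟨F, hF, hp, hlt⟩
  choose F hFs hFp hFu using exF
  -- compactness
  set C : Set (Fin N → Fin (N+1) → ℝ) :=
    Set.univ.pi (fun _ => Set.univ.pi (fun _ => Set.Icc (0:ℝ) 1)) with hC
  have hCcpt : IsCompact C :=
    isCompact_univ_pi fun _ => isCompact_univ_pi fun _ => isCompact_Icc
  have hmem : ∀ n, F n ∈ C := by
    intro n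
    rw [hC]
    rw [Set.mem_univ_pi]
    intro y
    rw [Set.mem_univ_pi]
    intro z
    refine ⟨(hFs n).1 y z, ?_⟩
    calc F n y z ≤ ∑ z', F n y z' :=
          Finset.single_le_sum (fun z' _ => (hFs n).1 y z') (Finset.mem_univ z)
      _ = 1 := (hFs n).2 y
  obtain ⟨L, hLC, φ, hφ, hconv⟩ := hCcpt.tendsto_subseq hmem
  -- limit is stochastic
  have hyz : ∀ y z, Tendsto (fun n => F (φ n) y z) atTop (𝓝 (L y z)) := by
    intro y z
    have h1 := tendsto_pi_nhds.mp hconv y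
    exact tendsto_pi_nhds.mp h1 z
  have hLs : IsStoch L := by
    constructor
    · intro y z
      have := hLC y (Set.mem_univ y)
      have := this z (Set.mem_univ z)
      exact this.1
    · intro y
      have hsum : Tendsto (fun n => ∑ z, F (φ n) y z) atTop (𝓝 (∑ z, L y z)) :=
        tendsto_finset_sum _ fun z _ => hyz y z
      have hone : (fun n => ∑ z, F (φ n) y z) = fun _ => (1:ℝ) := by
        funext n; exact (hFs (φ n)).2 y
      rw [hone] at hsum
      exact (tendsto_nhds_unique tendsto_const_nhds hsum).symm
  -- privP L ≤ pcX
  have hPp : privP P L ≤ pcX P := by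
    have t1 : Tendsto (fun n => privP P (F (φ n))) atTop (𝓝 (privP P L)) :=
      tendsto_privP hM hN P hP hconv
    have t2 : Tendsto (fun n : ℕ => pcX P + 1/(φ n + 1)) atTop (𝓝 (pcX P)) := by
      have : Tendsto (fun n : ℕ => pcX P + 1/(n + 1)) atTop (𝓝 (pcX P)) := by
        simpa using tendsto_const_nhds.add (tendsto_one_div_add_atTop_nhds_zero_nat : Tendsto (fun n : ℕ => 1 / ((n : ℝ) + 1)) atTop (𝓝 0))
      exact this.comp (hφ.tendsto_atTop)
    refine le_of_tendsto_of_tendsto' t1 t2 fun n => ?_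
    exact hFp (φ n)
  -- privU L ≥ hFun(pcX)+δ
  have hPu : hFun P (pcX P) + δ ≤ privU P L := by
    have t1 : Tendsto (fun n => privU P (F (φ n))) atTop (𝓝 (privU P L)) :=
      tendsto_privU hM hN P hP hconv
    exact ge_of_tendsto' t1 fun n => le_of_lt (hFu (φ n))
  have : privU P L ≤ hFun P (pcX P) :=
    le_csSup (hSet_bdd hM hN P hP (pcX P)) ⟨L, hLs, hPp, rfl⟩
  linarith

end Main

/-- If `P_c(X) < P_c(X|Y)`, the map `ε ↦ h(P_{XY}, ε)` is strictly increasing and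
continuous on the interval `[P_c(X), P_c(X|Y)]`. -/
theorem hFun_strictMono_continuous {M N : ℕ} (hM : 0 < M) (hN : 0 < N)
    (P : Fin M → Fin N → ℝ) (hP : IsPmf P) (hlt : pcX P < pcXgY P) :
    StrictMonoOn (hFun P) (Set.Icc (pcX P) (pcXgY P)) ∧
    ContinuousOn (hFun P) (Set.Icc (pcX P) (pcXgY P)) := by
  constructor
  · intro ε1 h1 ε2 h2 h12
    have := hFun_strict_step hM hN P hP h1.1 h12 h2.2
    linarith
  · intro ε0 hε0
    rw [Metric.continuousWithinAt_iff]
    intro δ hδ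
    rcases eq_or_lt_of_le hε0.1 with heq | hlt0
    · -- ε0 = pcX P
      obtain ⟨ε', hε'a, hε'le⟩ := hFun_right_cont hM hN P hP (δ/2) (by linarith)
      refine ⟨ε' - pcX P, by linarith, fun {x} hx hdist => ?_⟩
      rw [Real.dist_eq, abs_lt, ← heq] at hdist
      have hx1 : pcX P ≤ x := hx.1
      have hx2 : x < ε' := by linarith [hdist.2]
      have hlow : hFun P ε0 ≤ hFun P x := by
        rw [← heq]; exact hFun_mono hM hN P hP (le_refl _) hx1
      have hhigh : hFun P x ≤ hFun P ε0 + δ/2 := by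
        have h2 := hFun_mono hM hN P hP hx1 (le_of_lt hx2)
        rw [← heq]; linarith
      rw [Real.dist_eq, abs_lt]
      constructor <;> linarith
    · -- pcX P < ε0
      have hd : 0 < ε0 - pcX P := by linarith
      set η := min ((ε0 - pcX P)/2) (δ * (ε0 - pcX P) / 2) with hη
      have hη0 : 0 < η := by
        apply lt_min
        · linarith
        · positivity
      refine ⟨η, hη0, fun {x} hx hdist => ?_⟩
      rw [Real.dist_eq, abs_lt] at hdist
      have hbd1 : η ≤ (ε0 - pcX P)/2 := min_le_left _ _
      have hbd2 : η ≤ δ * (ε0 - pcX P) / 2 := min_le_right _ _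
      rw [Real.dist_eq, abs_lt]
      rcases le_total x ε0 with hle | hge
      · have hlow : hFun P x ≤ hFun P ε0 := hFun_mono hM hN P hP hx.1 hle
        have hlip : hFun P ε0 ≤ hFun P x + (ε0 - x) / (ε0 - pcX P) :=
          hFun_lip_step hM hN P hP hx.1 hle hlt0
        have : (ε0 - x) / (ε0 - pcX P) < δ := by
          rw [div_lt_iff₀ hd]
          nlinarith [hdist.1, hdist.2]
        constructor <;> linarith
      · have hlow : hFun P ε0 ≤ hFun P x := hFun_mono hM hN P hP hε0.1 hge
        have hx_gt : pcX P < x := by linarith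
        have hlip : hFun P x ≤ hFun P ε0 + (x - ε0) / (x - pcX P) :=
          hFun_lip_step hM hN P hP hε0.1 hge hx_gt
        have hden : ε0 - pcX P ≤ x - pcX P := by linarith
        have : (x - ε0) / (x - pcX P) < δ := by
          rw [div_lt_iff₀ (by linarith)]
          nlinarith [hdist.1, hdist.2]
        constructor <;> linarith
end
end

section
/- For every ε ∈ [P_c(X), P_c(X|Y)] there exists a privacy filter G ∈ ℱ such that 𝒫(G) = ε and 𝒰(G) = h(P_{XY}, ε); i.e., the maximum defining h is attained by a filter meeting the privacy constraint with equality. -/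
noncomputable section

lemma le_fin_ciSup {m : ℕ} (f : Fin m → ℝ) (i : Fin m) : f i ≤ ⨆ j, f j :=
  le_ciSup (Set.Finite.bddAbove (Set.finite_range f)) i

lemma continuous_fin_iSup {m : ℕ} [Nonempty (Fin m)] {α : Type*} [TopologicalSpace α]
    {f : Fin m → α → ℝ} (h : ∀ i, Continuous (f i)) :
    Continuous fun a => ⨆ i, f i a := by
  have he : (fun a => ⨆ i, f i a)
      = fun a => Finset.univ.sup' Finset.univ_nonempty (fun i => f i a) := by
    funext a; rw [Finset.sup'_univ_eq_ciSup]
  rw [he]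
  exact Continuous.finset_sup'_apply _ (fun i _ => h i)

private lemma exists_active_filter {M N : ℕ} [Nonempty (Fin M)] [Nonempty (Fin N)]
    (P : Fin M → Fin N → ℝ) (hPnn : ∀ x y, 0 ≤ P x y)
    (hQsum : ∑ y, ∑ x, P x y = 1)
    (F : Fin N → Fin (N + 1) → ℝ) (hFst : IsStoch F) (ε : ℝ)
    (hFP : privP P F ≤ ε) (hεr : ε ≤ pcXgY P) (hU1 : privU P F ≤ 1)
    (hQnn : ∀ y, (0:ℝ) ≤ ∑ x, P x y) :
    ∃ G : Fin N → Fin (N + 1) → ℝ, IsStoch G ∧ privP P G = ε ∧ privU P F ≤ privU P G := by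
  classical
  choose σ hσ using fun z : Fin (N + 1) =>
    Finite.exists_max fun y : Fin N => (∑ x, P x y) * F y z
  set F' : Fin N → Fin (N + 1) → ℝ :=
    fun y z => ∑ w, if (σ w).castSucc = z then F y w else 0 with hF'def
  have hF'nn : ∀ y z, 0 ≤ F' y z := fun y z =>
    Finset.sum_nonneg fun w _ => by split
      <;> first | exact hFst.1 y w | exact le_refl 0
  have hF'row : ∀ y, ∑ z, F' y z = 1 := by
    intro y
    rw [hF'def]
    rw [Finset.sum_comm]
    calc ∑ w, ∑ z, (if (σ w).castSucc = z then F y w else 0) = ∑ w, F y w := by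
          apply Finset.sum_congr rfl; intro w _; simp
      _ = 1 := hFst.2 y
  have hlast : ∀ y, F' y (Fin.last N) = 0 := by
    intro y
    apply Finset.sum_eq_zero
    intro w _
    rw [if_neg (Fin.castSucc_lt_last (σ w)).ne]
  -- column sup attained at the diagonal
  have hcol : ∀ y0 : Fin N, (⨆ y, (∑ x, P x y) * F' y y0.castSucc)
      = (∑ x, P x y0) * F' y0 y0.castSucc := by
    intro y0
    apply le_antisymm
    · apply ciSup_le
      intro y
      simp only [hF'def]
      rw [Finset.mul_sum, Finset.mul_sum]
      apply Finset.sum_le_sum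
      intro w _
      by_cases hw : (σ w).castSucc = y0.castSucc
      · rw [if_pos hw, if_pos hw]
        have hww : σ w = y0 := Fin.castSucc_inj.mp hw
        have := hσ w y
        rwa [hww] at this
      · rw [if_neg hw, if_neg hw, mul_zero, mul_zero]
    · exact le_fin_ciSup (fun y => (∑ x, P x y) * F' y y0.castSucc) y0
  have hsupF : ∀ w : Fin (N + 1),
      (⨆ y, (∑ x, P x y) * F y w) = (∑ x, P x (σ w)) * F (σ w) w :=
    fun w => le_antisymm (ciSup_le (hσ w)) (le_fin_ciSup (fun y => (∑ x, P x y) * F y w) (σ w))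
  have h0last : (⨆ y, (∑ x, P x y) * F' y (Fin.last N)) = 0 := by
    simp [hlast, ciSup_const]
  have hUF' : privU P F' = ∑ y0 : Fin N, (∑ x, P x y0) * F' y0 y0.castSucc := by
    rw [privU, Fin.sum_univ_castSucc, h0last, add_zero]
    exact Finset.sum_congr rfl fun y0 _ => hcol y0
  have hU' : privU P F' = privU P F := by
    rw [hUF']
    calc ∑ y0 : Fin N, (∑ x, P x y0) * F' y0 y0.castSucc
        = ∑ y0 : Fin N, ∑ w, (if σ w = y0 then (∑ x, P x y0) * F y0 w else 0) := by
          apply Finset.sum_congr rfl; intro y0 _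
          simp only [hF'def]
          rw [Finset.mul_sum]
          apply Finset.sum_congr rfl; intro w _
          rw [mul_ite, mul_zero]
          congr 1
          simp [Fin.castSucc_inj]
      _ = ∑ w, ∑ y0 : Fin N, (if σ w = y0 then (∑ x, P x y0) * F y0 w else 0) :=
          Finset.sum_comm
      _ = ∑ w, (∑ x, P x (σ w)) * F (σ w) w := by
          apply Finset.sum_congr rfl; intro w _; simp
      _ = privU P F := by
          rw [privU]; exact Finset.sum_congr rfl fun w _ => (hsupF w).symm
  have hP' : privP P F' ≤ privP P F := by
    have key : ∀ z, (⨆ x, ∑ y, P x y * F' y z)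
        ≤ ∑ w, (if (σ w).castSucc = z then ⨆ x, ∑ y, P x y * F y w else 0) := by
      intro z
      apply ciSup_le
      intro x
      have hx : ∑ y, P x y * F' y z
          = ∑ w, (if (σ w).castSucc = z then ∑ y, P x y * F y w else 0) := by
        calc ∑ y, P x y * F' y z
            = ∑ y, ∑ w, (if (σ w).castSucc = z then P x y * F y w else 0) := by
              apply Finset.sum_congr rfl; intro y _
              simp only [hF'def]
              rw [Finset.mul_sum]
              exact Finset.sum_congr rfl fun w _ => by rw [mul_ite, mul_zero]
          _ = ∑ w, ∑ y, (if (σ w).castSucc = z then P x y * F y w else 0) := Finset.sum_comm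
          _ = ∑ w, (if (σ w).castSucc = z then ∑ y, P x y * F y w else 0) := by
              apply Finset.sum_congr rfl; intro w _
              split <;> simp
      rw [hx]
      apply Finset.sum_le_sum
      intro w _
      split
      · exact le_fin_ciSup (fun x => ∑ y, P x y * F y w) x
      · exact le_refl 0
    calc privP P F' ≤ ∑ z, ∑ w, (if (σ w).castSucc = z then ⨆ x, ∑ y, P x y * F y w else 0) :=
          Finset.sum_le_sum fun z _ => key z
      _ = ∑ w, ∑ z, (if (σ w).castSucc = z then ⨆ x, ∑ y, P x y * F y w else 0) :=
          Finset.sum_comm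
      _ = privP P F := by rw [privP]; apply Finset.sum_congr rfl; intro w _; simp
  -- deterministic identity filter
  set D : Fin N → Fin (N + 1) → ℝ := fun y z => if z = y.castSucc then 1 else 0 with hDdef
  have hDnn : ∀ y z, (0:ℝ) ≤ D y z := fun y z => by show (0:ℝ) ≤ if z = y.castSucc then 1 else 0; split <;> norm_num
  have hDrow : ∀ y, ∑ z, D y z = 1 := fun y => by simp [hDdef]
  have hDlast : ∀ y, D y (Fin.last N) = 0 :=
    fun y => if_neg (Fin.castSucc_lt_last y).ne'
  have hPD : privP P D = pcXgY P := by
    rw [privP, Fin.sum_univ_castSucc, pcXgY]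
    have h1 : ∀ y0 : Fin N, (⨆ x, ∑ y, P x y * D y y0.castSucc) = ⨆ x, P x y0 := by
      intro y0
      apply iSup_congr
      intro x
      simp [hDdef, Fin.castSucc_inj, eq_comm]
    have h2 : (⨆ x, ∑ y, P x y * D y (Fin.last N)) = 0 := by
      simp [hDlast, ciSup_const]
    rw [h2, add_zero]
    exact Finset.sum_congr rfl fun y0 _ => h1 y0
  -- the path
  set Gt : ℝ → (Fin N → Fin (N + 1) → ℝ) :=
    fun t y z => (1 - t) * F' y z + t * D y z with hGtdef
  have contφ : Continuous fun t => privP P (Gt t) := by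
    apply continuous_finset_sum
    intro z _
    apply continuous_fin_iSup
    intro x
    apply continuous_finset_sum
    intro y _
    apply Continuous.mul continuous_const
    exact ((continuous_const.sub continuous_id).mul continuous_const).add
      (continuous_id.mul continuous_const)
  have hG0 : Gt 0 = F' := by funext y z; simp [hGtdef]
  have hG1 : Gt 1 = D := by funext y z; simp [hGtdef]
  have hεmem : ε ∈ Set.Icc (privP P (Gt 0)) (privP P (Gt 1)) := by
    rw [hG0, hG1, hPD]
    exact ⟨le_trans hP' hFP, hεr⟩
  obtain ⟨t, ht, hφt⟩ := intermediate_value_Icc zero_le_one contφ.continuousOn hεmem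
  refine ⟨Gt t, ⟨?_, ?_⟩, hφt, ?_⟩
  · intro y z
    exact add_nonneg (mul_nonneg (by linarith [ht.2]) (hF'nn y z)) (mul_nonneg ht.1 (hDnn y z))
  · intro y
    simp only [hGtdef]
    rw [Finset.sum_add_distrib, ← Finset.mul_sum, ← Finset.mul_sum, hF'row, hDrow]
    ring
  · -- privU bound
    have hmain : ∀ y0 : Fin N,
        (1 - t) * ((∑ x, P x y0) * F' y0 y0.castSucc) + t * (∑ x, P x y0)
          ≤ ⨆ y, (∑ x, P x y) * Gt t y y0.castSucc := by
      intro y0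
      have h := le_fin_ciSup (fun y => (∑ x, P x y) * Gt t y y0.castSucc) y0
      have hD1 : D y0 y0.castSucc = 1 := if_pos rfl
      have heq : (∑ x, P x y0) * Gt t y0 y0.castSucc
          = (1 - t) * ((∑ x, P x y0) * F' y0 y0.castSucc) + t * (∑ x, P x y0) := by
        simp only [hGtdef]
        rw [hD1]
        ring
      rw [← heq]
      exact h
    have hlastG : (0:ℝ) ≤ ⨆ y, (∑ x, P x y) * Gt t y (Fin.last N) := by
      obtain ⟨y⟩ := (inferInstance : Nonempty (Fin N))
      have h := le_fin_ciSup (fun y => (∑ x, P x y) * Gt t y (Fin.last N)) y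
      have : (∑ x, P x y) * Gt t y (Fin.last N) = 0 := by
        simp [hGtdef, hlast y, hDlast y]
      linarith
    have hbound : (1 - t) * privU P F' + t ≤ privU P (Gt t) := by
      conv_rhs => rw [privU, Fin.sum_univ_castSucc]
      have hsum : (1 - t) * privU P F' + t
          = ∑ y0 : Fin N, ((1 - t) * ((∑ x, P x y0) * F' y0 y0.castSucc)
              + t * (∑ x, P x y0)) := by
        rw [Finset.sum_add_distrib, ← Finset.mul_sum, ← Finset.mul_sum, hQsum, hUF']
        ring
      rw [hsum]
      calc ∑ y0 : Fin N, ((1 - t) * ((∑ x, P x y0) * F' y0 y0.castSucc) + t * (∑ x, P x y0))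
          ≤ ∑ y0 : Fin N, ⨆ y, (∑ x, P x y) * Gt t y y0.castSucc :=
            Finset.sum_le_sum fun y0 _ => hmain y0
        _ ≤ _ := le_add_of_nonneg_right hlastG
    rw [hU'] at hbound
    nlinarith [ht.1, ht.2, mul_nonneg ht.1 (sub_nonneg.mpr hU1)]


/-- For every `ε ∈ [P_c(X), P_c(X|Y)]` there exists an optimal privacy filter `G ∈ ℱ`
with `𝒫(G) = ε` and `𝒰(G) = h(P_{XY}, ε)`. -/
theorem hFun_attained {M N : ℕ} (hM : 0 < M) (hN : 0 < N)
    (P : Fin M → Fin N → ℝ) (hP : IsPmf P)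
    (ε : ℝ) (hε : ε ∈ Set.Icc (pcX P) (pcXgY P)) :
    ∃ G ∈ filtSet N, privP P G = ε ∧ privU P G = hFun P ε := by
  obtain ⟨hεl, hεr⟩ := hε
  haveI hMn : Nonempty (Fin M) := ⟨⟨0, hM⟩⟩
  haveI hNn : Nonempty (Fin N) := ⟨⟨0, hN⟩⟩
  obtain ⟨hPnn, hPsum⟩ := hP
  have hQnn : ∀ y, (0:ℝ) ≤ ∑ x, P x y := fun y => Finset.sum_nonneg fun x _ => hPnn x y
  have hQsum : ∑ y, ∑ x, P x y = 1 := by rw [Finset.sum_comm]; exact hPsum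
  -- privU ≤ 1 for stochastic filters
  have hUle1 : ∀ F : Fin N → Fin (N + 1) → ℝ, IsStoch F → privU P F ≤ 1 := by
    intro F hF
    have h1 : privU P F ≤ ∑ z, ∑ y, (∑ x, P x y) * F y z := by
      apply Finset.sum_le_sum; intro z _
      apply ciSup_le; intro y
      exact Finset.single_le_sum (fun y' _ => mul_nonneg (hQnn y') (hF.1 y' z))
        (Finset.mem_univ y)
    have h2 : ∑ z, ∑ y, (∑ x, P x y) * F y z = 1 := by
      rw [Finset.sum_comm]
      calc ∑ y, ∑ z, (∑ x, P x y) * F y z = ∑ y, (∑ x, P x y) * ∑ z, F y z := by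
            simp [Finset.mul_sum]
        _ = 1 := by simp [hF.2, hQsum]
    linarith
  -- the feasible set
  set S : Set (Fin N → Fin (N + 1) → ℝ) := {F | IsStoch F ∧ privP P F ≤ ε} with hSdef
  -- nonempty
  have hSne : S.Nonempty := by
    refine ⟨fun _ z => if z = 0 then 1 else 0, ⟨⟨fun y z => by positivity, fun y => by simp⟩, ?_⟩⟩
    have h1 : ∀ z : Fin (N + 1),
        (⨆ x, ∑ y, P x y * (if z = 0 then (1:ℝ) else 0)) = if z = 0 then pcX P else 0 := by
      intro z
      by_cases hz : z = 0 <;> simp [hz, pcX, ciSup_const]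
    calc privP P (fun _ z => if z = 0 then (1:ℝ) else 0)
        = ∑ z : Fin (N + 1), if z = 0 then pcX P else 0 :=
          Finset.sum_congr rfl fun z _ => h1 z
      _ = pcX P := by simp
      _ ≤ ε := hεl
  -- continuity of privP and privU
  have contP : Continuous fun F : Fin N → Fin (N + 1) → ℝ => privP P F := by
    apply continuous_finset_sum
    intro z _
    apply continuous_fin_iSup
    intro x
    apply continuous_finset_sum
    intro y _
    exact continuous_const.mul ((continuous_apply z).comp (continuous_apply y))
  have contU : Continuous fun F : Fin N → Fin (N + 1) → ℝ => privU P F := by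
    apply continuous_finset_sum
    intro z _
    apply continuous_fin_iSup
    intro y
    exact continuous_const.mul ((continuous_apply z).comp (continuous_apply y))
  -- compactness of S
  have hSK : S ⊆ Set.pi Set.univ fun _ : Fin N =>
      Set.pi Set.univ fun _ : Fin (N + 1) => Set.Icc (0:ℝ) 1 := by
    intro F hF y _ z _
    refine ⟨hF.1.1 y z, ?_⟩
    calc F y z ≤ ∑ z', F y z' :=
          Finset.single_le_sum (fun z' _ => hF.1.1 y z') (Finset.mem_univ z)
      _ = 1 := hF.1.2 y
  have hSclosed : IsClosed S := by
    have hrep : S = (⋂ y, ⋂ z, {F : Fin N → Fin (N + 1) → ℝ | 0 ≤ F y z}) ∩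
        ((⋂ y, {F : Fin N → Fin (N + 1) → ℝ | ∑ z, F y z = 1}) ∩ {F | privP P F ≤ ε}) := by
      ext F
      simp only [hSdef, Set.mem_setOf_eq, Set.mem_inter_iff, Set.mem_iInter, IsStoch]
      tauto
    rw [hrep]
    refine IsClosed.inter (isClosed_iInter fun y => isClosed_iInter fun z => ?_)
      (IsClosed.inter (isClosed_iInter fun y => ?_) ?_)
    · exact isClosed_le continuous_const ((continuous_apply z).comp (continuous_apply y))
    · exact isClosed_eq (continuous_finset_sum _ fun z _ =>
        ((continuous_apply z).comp (continuous_apply y))) continuous_const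
    · exact isClosed_le contP continuous_const
  have hScompact : IsCompact S :=
    IsCompact.of_isClosed_subset
      (isCompact_univ_pi fun _ => isCompact_univ_pi fun _ => isCompact_Icc) hSclosed hSK
  -- maximizer
  obtain ⟨F, hFS, hFmax⟩ := hScompact.exists_isMaxOn hSne contU.continuousOn
  have hFmem : privU P F ∈ {u | ∃ F ∈ filtSet N, privP P F ≤ ε ∧ privU P F = u} :=
    ⟨F, hFS.1, hFS.2, rfl⟩
  have hubF : ∀ u ∈ {u | ∃ F ∈ filtSet N, privP P F ≤ ε ∧ privU P F = u}, u ≤ privU P F := by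
    rintro u ⟨F', hF', hPle, rfl⟩
    exact hFmax (⟨hF', hPle⟩ : F' ∈ S)
  have hhFun : hFun P ε = privU P F :=
    le_antisymm (csSup_le (Set.nonempty_of_mem hFmem) hubF) (le_csSup ⟨privU P F, hubF⟩ hFmem)
  obtain ⟨G, hGst, hGP, hGUge⟩ :=
    exists_active_filter P hPnn hQsum F hFS.1 ε hFS.2 hεr (hUle1 F hFS.1) hQnn
  refine ⟨G, hGst, hGP, ?_⟩
  rw [hhFun]
  exact le_antisymm (hFmax (⟨hGst, le_of_eq hGP⟩ : G ∈ S)) hGUge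
end
end

section
/- The function h(P_{XY}, ·) : [P_c(X), P_c(X|Y)] → ℝ is piecewise linear: there exist an integer K ≥ 1 and thresholds P_c(X) = ε_0 < ε_1 < … < ε_K = P_c(X|Y) such that h(P_{XY}, ·) is affine on [ε_{i−1}, ε_i] for every 1 ≤ i ≤ K. -/
noncomputable section

open Set Finset

namespace PWL

/-- Finite attained sup. -/
lemma fin_sup_exists {ι : Type*} [Nonempty ι] [Finite ι] (f : ι → ℝ) :
    ∃ i, (∀ j, f j ≤ f i) ∧ (⨆ j, f j) = f i := by
  obtain ⟨i, hi⟩ := Finite.exists_max f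
  exact ⟨i, hi, le_antisymm (ciSup_le hi) (le_ciSup (Set.Finite.bddAbove (Set.finite_range f)) i)⟩

lemma le_fin_sup {ι : Type*} [Nonempty ι] [Finite ι] (f : ι → ℝ) (i : ι) :
    f i ≤ ⨆ j, f j :=
  le_ciSup (Set.Finite.bddAbove (Set.finite_range f)) i

lemma fin_sup_le {ι : Type*} [Nonempty ι] [Finite ι] {f : ι → ℝ} {c : ℝ}
    (h : ∀ i, f i ≤ c) : (⨆ j, f j) ≤ c := ciSup_le h

lemma cont_finset_sup' {ι X : Type*} [TopologicalSpace X] (s : Finset ι) (hs : s.Nonempty)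
    (g : ι → X → ℝ) (hg : ∀ i, Continuous (g i)) :
    Continuous fun x => s.sup' hs (fun i => g i x) := by
  induction hs using Finset.Nonempty.cons_induction with
  | singleton i => simpa using hg i
  | cons i s his hs ih =>
      have : (fun x => (Finset.cons i s his).sup' (Finset.cons_nonempty his) fun j => g j x)
          = fun x => max (g i x) (s.sup' hs fun j => g j x) := by
        funext x; rw [Finset.sup'_cons]
      rw [this]
      exact (hg i).max ih

lemma cont_fin_sup {ι X : Type*} [Nonempty ι] [Fintype ι] [TopologicalSpace X]
    (g : ι → X → ℝ) (hg : ∀ i, Continuous (g i)) :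
    Continuous fun x => ⨆ i, g i x := by
  have hne : (Finset.univ : Finset ι).Nonempty := Finset.univ_nonempty
  have : (fun x => ⨆ i, g i x) = fun x => Finset.univ.sup' hne (fun i => g i x) := by
    funext x
    apply le_antisymm
    · exact fin_sup_le fun i => Finset.le_sup' (f := fun i => g i x) (Finset.mem_univ i)
    · exact Finset.sup'_le _ _ fun i _ => le_fin_sup (fun j => g j x) i
  rw [this]
  exact cont_finset_sup' _ hne g hg

end PWL

namespace PWL

variable {M N : ℕ} (P : Fin M → Fin N → ℝ)

/-- Linearized privacy constraint functional for a selector `σ`. -/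
def Lsel (σ : Fin (N + 1) → Fin M) (F : Fin N → Fin (N + 1) → ℝ) : ℝ :=
  ∑ z, ∑ y, P (σ z) y * F y z

/-- Linearized utility functional for a selector `τ`. -/
def Usel (τ : Fin (N + 1) → Fin N) (F : Fin N → Fin (N + 1) → ℝ) : ℝ :=
  ∑ z, (∑ x, P x (τ z)) * F (τ z) z

/-- The feasible set of filters at level `ε`. -/
def Kset (ε : ℝ) : Set (Fin N → Fin (N + 1) → ℝ) :=
  {F | F ∈ filtSet N ∧ privP P F ≤ ε}

section basic

variable (hM : 0 < M) (hN : 0 < N)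

lemma Lsel_le_privP (hM : 0 < M) (σ : Fin (N + 1) → Fin M) (F : Fin N → Fin (N + 1) → ℝ) :
    Lsel P σ F ≤ privP P F := by
  haveI : Nonempty (Fin M) := ⟨⟨0, hM⟩⟩
  exact Finset.sum_le_sum fun z _ => le_fin_sup (fun x => ∑ y, P x y * F y z) (σ z)

lemma exists_Lsel_eq_privP (hM : 0 < M) (F : Fin N → Fin (N + 1) → ℝ) :
    ∃ σ : Fin (N + 1) → Fin M, Lsel P σ F = privP P F := by
  haveI : Nonempty (Fin M) := ⟨⟨0, hM⟩⟩
  have h := fun z : Fin (N + 1) => fin_sup_exists (fun x => ∑ y, P x y * F y z)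
  refine ⟨fun z => (h z).choose, Finset.sum_congr rfl fun z _ => ?_⟩
  exact ((h z).choose_spec.2).symm

lemma privP_le_iff (hM : 0 < M) (F : Fin N → Fin (N + 1) → ℝ) (ε : ℝ) :
    privP P F ≤ ε ↔ ∀ σ, Lsel P σ F ≤ ε := by
  constructor
  · exact fun h σ => (Lsel_le_privP P hM σ F).trans h
  · intro h
    obtain ⟨σ, hσ⟩ := exists_Lsel_eq_privP P hM F
    exact hσ ▸ h σ

lemma Usel_le_privU (hN : 0 < N) (τ : Fin (N + 1) → Fin N) (F : Fin N → Fin (N + 1) → ℝ) :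
    Usel P τ F ≤ privU P F := by
  haveI : Nonempty (Fin N) := ⟨⟨0, hN⟩⟩
  exact Finset.sum_le_sum fun z _ => le_fin_sup (fun y => (∑ x, P x y) * F y z) (τ z)

lemma exists_Usel_eq_privU (hN : 0 < N) (F : Fin N → Fin (N + 1) → ℝ) :
    ∃ τ : Fin (N + 1) → Fin N, Usel P τ F = privU P F := by
  haveI : Nonempty (Fin N) := ⟨⟨0, hN⟩⟩
  have h := fun z : Fin (N + 1) => fin_sup_exists (fun y => (∑ x, P x y) * F y z)
  refine ⟨fun z => (h z).choose, Finset.sum_congr rfl fun z _ => ?_⟩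
  exact ((h z).choose_spec.2).symm

end basic

/- Linearity identities. -/
lemma Lsel_comb (σ : Fin (N + 1) → Fin M) (a b : ℝ) (F G : Fin N → Fin (N + 1) → ℝ) :
    Lsel P σ (a • F + b • G) = a * Lsel P σ F + b * Lsel P σ G := by
  simp only [Lsel, Pi.add_apply, Pi.smul_apply, smul_eq_mul, Finset.mul_sum]
  rw [← Finset.sum_add_distrib]
  refine Finset.sum_congr rfl fun z _ => ?_
  rw [← Finset.sum_add_distrib]
  refine Finset.sum_congr rfl fun y _ => by ring

lemma Usel_comb (τ : Fin (N + 1) → Fin N) (a b : ℝ) (F G : Fin N → Fin (N + 1) → ℝ) :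
    Usel P τ (a • F + b • G) = a * Usel P τ F + b * Usel P τ G := by
  simp only [Usel, Pi.add_apply, Pi.smul_apply, smul_eq_mul, Finset.mul_sum]
  rw [← Finset.sum_add_distrib]
  exact Finset.sum_congr rfl fun z _ => by ring

lemma rowsum_comb (a b : ℝ) (F G : Fin N → Fin (N + 1) → ℝ) (y : Fin N) :
    ∑ z, (a • F + b • G) y z = a * ∑ z, F y z + b * ∑ z, G y z := by
  simp only [Pi.add_apply, Pi.smul_apply, smul_eq_mul, Finset.mul_sum]
  rw [← Finset.sum_add_distrib]

section topol

lemma cont_Lsel (σ : Fin (N + 1) → Fin M) : Continuous (Lsel P σ) := by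
  refine continuous_finset_sum _ fun z _ => continuous_finset_sum _ fun y _ => ?_
  exact (continuous_const.mul ((continuous_apply z).comp (continuous_apply y)))

lemma cont_Usel (τ : Fin (N + 1) → Fin N) : Continuous (Usel P τ) := by
  refine continuous_finset_sum _ fun z _ => ?_
  exact (continuous_const.mul ((continuous_apply z).comp (continuous_apply (τ z))))

lemma cont_privP (hM : 0 < M) :
    Continuous (privP P : (Fin N → Fin (N + 1) → ℝ) → ℝ) := by
  have hrw : (privP P : (Fin N → Fin (N + 1) → ℝ) → ℝ)
      = fun F => ∑ z, ⨆ x, ∑ y, P x y * F y z := rfl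
  rw [hrw]
  haveI : Nonempty (Fin M) := ⟨⟨0, hM⟩⟩
  refine continuous_finset_sum _ fun z _ => cont_fin_sup _ fun x => ?_
  exact continuous_finset_sum _ fun y _ =>
    continuous_const.mul ((continuous_apply z).comp (continuous_apply y))

lemma cont_privU (hN : 0 < N) :
    Continuous (privU P : (Fin N → Fin (N + 1) → ℝ) → ℝ) := by
  have hrw : (privU P : (Fin N → Fin (N + 1) → ℝ) → ℝ)
      = fun F => ∑ z, ⨆ y, (∑ x, P x y) * F y z := rfl
  rw [hrw]
  haveI : Nonempty (Fin N) := ⟨⟨0, hN⟩⟩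
  refine continuous_finset_sum _ fun z _ => cont_fin_sup _ fun y => ?_
  exact continuous_const.mul ((continuous_apply z).comp (continuous_apply y))

lemma privP_comb_le (hM : 0 < M) {a b : ℝ} (ha : 0 ≤ a) (hb : 0 ≤ b)
    (F G : Fin N → Fin (N + 1) → ℝ) :
    privP P (a • F + b • G) ≤ a * privP P F + b * privP P G := by
  haveI : Nonempty (Fin M) := ⟨⟨0, hM⟩⟩
  simp only [privP]
  rw [Finset.mul_sum, Finset.mul_sum, ← Finset.sum_add_distrib]
  refine Finset.sum_le_sum fun z _ => fin_sup_le fun x => ?_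
  have h1 : ∑ y, P x y * (a • F + b • G) y z
      = a * (∑ y, P x y * F y z) + b * (∑ y, P x y * G y z) := by
    rw [Finset.mul_sum, Finset.mul_sum, ← Finset.sum_add_distrib]
    exact Finset.sum_congr rfl fun y _ => by simp [Pi.add_apply]; ring
  rw [h1]
  have h2 : (∑ y, P x y * F y z) ≤ ⨆ x', ∑ y, P x' y * F y z :=
    le_fin_sup (fun x' => ∑ y, P x' y * F y z) x
  have h3 : (∑ y, P x y * G y z) ≤ ⨆ x', ∑ y, P x' y * G y z :=
    le_fin_sup (fun x' => ∑ y, P x' y * G y z) x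
  exact add_le_add (mul_le_mul_of_nonneg_left h2 ha) (mul_le_mul_of_nonneg_left h3 hb)

lemma Kset_closed (hM : 0 < M) (ε : ℝ) : IsClosed (Kset P ε) := by
  have h1 : IsClosed {F : Fin N → Fin (N + 1) → ℝ | ∀ y z, 0 ≤ F y z} := by
    have : {F : Fin N → Fin (N + 1) → ℝ | ∀ y z, 0 ≤ F y z}
        = ⋂ (y) (z), {F : Fin N → Fin (N + 1) → ℝ | 0 ≤ F y z} := by
      ext F; simp [Set.mem_iInter]
    rw [this]
    exact isClosed_iInter fun y => isClosed_iInter fun z =>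
      isClosed_le continuous_const ((continuous_apply z).comp (continuous_apply y))
  have h2 : IsClosed {F : Fin N → Fin (N + 1) → ℝ | ∀ y, ∑ z, F y z = 1} := by
    have : {F : Fin N → Fin (N + 1) → ℝ | ∀ y, ∑ z, F y z = 1}
        = ⋂ (y), {F : Fin N → Fin (N + 1) → ℝ | ∑ z, F y z = 1} := by
      ext F; simp [Set.mem_iInter]
    rw [this]
    exact isClosed_iInter fun y => isClosed_eq
      (continuous_finset_sum _ fun z _ => (continuous_apply z).comp (continuous_apply y))
      continuous_const
  have h3 : IsClosed {F : Fin N → Fin (N + 1) → ℝ | privP P F ≤ ε} :=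
    isClosed_le (cont_privP P hM) continuous_const
  have : Kset P ε = ({F | ∀ y z, 0 ≤ F y z} ∩ {F | ∀ y, ∑ z, F y z = 1}) ∩ {F | privP P F ≤ ε} := by
    ext F
    simp only [Kset, filtSet, IsStoch, Set.mem_setOf_eq, Set.mem_inter_iff]
  rw [this]
  exact ((h1.inter h2).inter h3)

lemma Kset_compact (hM : 0 < M) (ε : ℝ) : IsCompact (Kset P ε) := by
  have hsub : Kset P ε ⊆ Set.univ.pi fun _ : Fin N =>
      (Set.univ.pi fun _ : Fin (N + 1) => Set.Icc (0:ℝ) 1) := by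
    intro F hF
    obtain ⟨⟨hpos, hrow⟩, _⟩ := hF
    intro y _
    intro z _
    refine ⟨hpos y z, ?_⟩
    calc F y z ≤ ∑ z', F y z' :=
          Finset.single_le_sum (fun z' _ => hpos y z') (Finset.mem_univ z)
      _ = 1 := hrow y
  have hcomp : IsCompact (Set.univ.pi fun _ : Fin N =>
      (Set.univ.pi fun _ : Fin (N + 1) => Set.Icc (0:ℝ) 1)) :=
    isCompact_univ_pi fun _ => isCompact_univ_pi fun _ => isCompact_Icc
  exact IsCompact.of_isClosed_subset hcomp (Kset_closed P hM ε) hsub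

lemma Kset_convex (hM : 0 < M) (ε : ℝ) : Convex ℝ (Kset P ε) := by
  intro F hF G hG a b ha hb hab
  obtain ⟨⟨hFpos, hFrow⟩, hFP⟩ := hF
  obtain ⟨⟨hGpos, hGrow⟩, hGP⟩ := hG
  refine ⟨⟨fun y z => ?_, fun y => ?_⟩, ?_⟩
  · have : (a • F + b • G) y z = a * F y z + b * G y z := by simp
    rw [this]
    exact add_nonneg (mul_nonneg ha (hFpos y z)) (mul_nonneg hb (hGpos y z))
  · rw [rowsum_comb, hFrow y, hGrow y]; linarith
  · calc privP P (a • F + b • G) ≤ a * privP P F + b * privP P G := privP_comb_le P hM ha hb F G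
      _ ≤ a * ε + b * ε := add_le_add (mul_le_mul_of_nonneg_left hFP ha)
          (mul_le_mul_of_nonneg_left hGP hb)
      _ = ε := by rw [← add_mul, hab, one_mul]

/-- The constant filter sending everything to output `0`. -/
def F0 : Fin N → Fin (N + 1) → ℝ := fun _ z => if z = 0 then 1 else 0

lemma F0_stoch : (F0 : Fin N → Fin (N + 1) → ℝ) ∈ filtSet N := by
  constructor
  · intro y z; by_cases h : z = 0 <;> simp [F0, h]
  · intro y; simp [F0]

lemma privP_F0 : privP P (F0 : Fin N → Fin (N + 1) → ℝ) = pcX P := by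
  have hterm : ∀ (x : Fin M) (z : Fin (N + 1)),
      ∑ y, P x y * F0 y z = if z = 0 then ∑ y, P x y else 0 := by
    intro x z
    by_cases h : z = 0 <;> simp [F0, h]
  have : ∀ z : Fin (N + 1), (⨆ x, ∑ y, P x y * F0 y z)
      = if z = 0 then (⨆ x, ∑ y, P x y) else (⨆ _ : Fin M, (0:ℝ)) := by
    intro z
    by_cases h : z = 0 <;> simp only [hterm, h, if_true, if_false]
  rw [privP]
  simp only [this]
  simp [Finset.sum_ite_eq', pcX, ciSup_const]

lemma privU_F0 : privU P (F0 : Fin N → Fin (N + 1) → ℝ) = pcY P := by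
  have hterm : ∀ (y : Fin N) (z : Fin (N + 1)),
      (∑ x, P x y) * F0 y z = if z = 0 then ∑ x, P x y else 0 := by
    intro y z
    by_cases h : z = 0 <;> simp [F0, h]
  have : ∀ z : Fin (N + 1), (⨆ y, (∑ x, P x y) * F0 y z)
      = if z = 0 then (⨆ y, ∑ x, P x y) else (⨆ _ : Fin N, (0:ℝ)) := by
    intro z
    by_cases h : z = 0 <;> simp only [hterm, h, if_true, if_false]
  rw [privU]
  simp only [this]
  simp [Finset.sum_ite_eq', pcY, ciSup_const]

lemma Kset_nonempty {ε : ℝ} (hε : pcX P ≤ ε) : (Kset P ε).Nonempty :=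
  ⟨F0, F0_stoch, by rw [privP_F0]; exact hε⟩

lemma value_set_eq (ε : ℝ) :
    {u | ∃ F ∈ filtSet N, privP P F ≤ ε ∧ privU P F = u} = privU P '' Kset P ε := by
  ext u
  constructor
  · rintro ⟨F, hF, hP, hU⟩; exact ⟨F, ⟨hF, hP⟩, hU⟩
  · rintro ⟨F, ⟨hF, hP⟩, hU⟩; exact ⟨F, hF, hP, hU⟩

lemma hFun_attained (hM : 0 < M) (hN : 0 < N) {ε : ℝ} (hε : pcX P ≤ ε) :
    ∃ F ∈ Kset P ε, privU P F = hFun P ε ∧ ∀ G ∈ Kset P ε, privU P G ≤ hFun P ε := by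
  have himg : IsCompact (privU P '' Kset P ε) :=
    (Kset_compact P hM ε).image (cont_privU P hN)
  have hne : (privU P '' Kset P ε).Nonempty := (Kset_nonempty P hε).image _
  have hmem := himg.sSup_mem hne
  rw [hFun, value_set_eq]
  obtain ⟨F, hF, hFu⟩ := hmem
  exact ⟨F, hF, hFu, fun G hG => le_csSup himg.bddAbove ⟨G, hG, rfl⟩⟩

lemma le_hFun (hM : 0 < M) (hN : 0 < N) {ε : ℝ} {F : Fin N → Fin (N + 1) → ℝ}
    (hF : F ∈ Kset P ε) : privU P F ≤ hFun P ε := by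
  rw [hFun, value_set_eq]
  exact le_csSup ((Kset_compact P hM ε).image (cont_privU P hN)).bddAbove ⟨F, hF, rfl⟩

lemma hFun_mono (hM : 0 < M) (hN : 0 < N) {ε₁ ε₂ : ℝ} (h1 : pcX P ≤ ε₁) (h12 : ε₁ ≤ ε₂) :
    hFun P ε₁ ≤ hFun P ε₂ := by
  obtain ⟨F, hF, hFu, -⟩ := hFun_attained P hM hN h1
  rw [← hFu]
  exact le_hFun P hM hN ⟨hF.1, hF.2.trans h12⟩

end topol

section continuity

lemma pcY_nonneg (hN : 0 < N) (hP : IsPmf P) : 0 ≤ pcY P := by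
  haveI : Nonempty (Fin N) := ⟨⟨0, hN⟩⟩
  have h0 : (0:ℝ) ≤ ∑ x, P x ⟨0, hN⟩ := Finset.sum_nonneg fun x _ => hP.1 x _
  exact h0.trans (le_fin_sup (fun y => ∑ x, P x y) ⟨0, hN⟩)

lemma hFun_nonneg (hM : 0 < M) (hN : 0 < N) (hP : IsPmf P) {ε : ℝ} (hε : pcX P ≤ ε) :
    0 ≤ hFun P ε := by
  have h1 : privU P (F0 : Fin N → Fin (N + 1) → ℝ) ≤ hFun P ε :=
    le_hFun P hM hN ⟨F0_stoch, by rw [privP_F0]; exact hε⟩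
  rw [privU_F0] at h1
  exact (pcY_nonneg P hN hP).trans h1

lemma key_right (hM : 0 < M) (hN : 0 < N) {ε₀ δ : ℝ} (hε₀ : pcX P ≤ ε₀) (hδ : 0 < δ) :
    ∃ εr, ε₀ < εr ∧ ∀ ε, ε₀ ≤ ε → ε ≤ εr → hFun P ε < hFun P ε₀ + δ := by
  by_contra hcon
  push_neg at hcon
  have hkey : ∀ ε : ℝ, ε₀ < ε → hFun P ε₀ + δ ≤ hFun P ε := by
    intro ε hε
    obtain ⟨ε', hε'1, hε'2, hε'3⟩ := hcon ε hε
    exact hε'3.trans (hFun_mono P hM hN (hε₀.trans hε'1) hε'2)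
  haveI : Nonempty {ε : ℝ // ε₀ < ε} := ⟨⟨ε₀ + 1, by linarith⟩⟩
  set D : {ε : ℝ // ε₀ < ε} → Set (Fin N → Fin (N + 1) → ℝ) :=
    fun ε => {F | F ∈ Kset P ε.1 ∧ hFun P ε₀ + δ ≤ privU P F} with hD
  have hDclosed : ∀ ε, IsClosed (D ε) := by
    intro ε
    exact (Kset_closed P hM ε.1).inter (isClosed_le continuous_const (cont_privU P hN))
  have hDcomp : ∀ ε, IsCompact (D ε) := fun ε =>
    IsCompact.of_isClosed_subset (Kset_compact P hM ε.1) (hDclosed ε) fun F hF => hF.1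
  have hDne : ∀ ε, (D ε).Nonempty := by
    intro ε
    obtain ⟨F, hF, hFu, -⟩ := hFun_attained P hM hN (hε₀.trans (le_of_lt ε.2))
    exact ⟨F, hF, by rw [hFu]; exact hkey ε.1 ε.2⟩
  have hdir : Directed (· ⊇ ·) D := by
    intro ε1 ε2
    refine ⟨⟨min ε1.1 ε2.1, lt_min ε1.2 ε2.2⟩, ?_, ?_⟩
    · intro F hF
      exact ⟨⟨hF.1.1, hF.1.2.trans (min_le_left _ _)⟩, hF.2⟩
    · intro F hF
      exact ⟨⟨hF.1.1, hF.1.2.trans (min_le_right _ _)⟩, hF.2⟩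
  obtain ⟨F, hF⟩ := IsCompact.nonempty_iInter_of_directed_nonempty_isCompact_isClosed
    D hdir hDne hDcomp hDclosed
  simp only [Set.mem_iInter] at hF
  have hFP : privP P F ≤ ε₀ := by
    by_contra hgt
    push_neg at hgt
    have hmem := hF ⟨(ε₀ + privP P F) / 2, by linarith⟩
    have := hmem.1.2
    simp only at this
    linarith
  have hstoch : F ∈ filtSet N := (hF ⟨ε₀ + 1, by linarith⟩).1.1
  have hle : privU P F ≤ hFun P ε₀ := le_hFun P hM hN ⟨hstoch, hFP⟩
  have hge : hFun P ε₀ + δ ≤ privU P F := (hF ⟨ε₀ + 1, by linarith⟩).2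
  linarith

lemma key_left (hM : 0 < M) (hN : 0 < N) (hP : IsPmf P) {ε₀ l : ℝ}
    (hε₀ : pcX P ≤ ε₀) (hl0 : 0 < l) (hl1 : l ≤ 1) :
    (1 - l) * hFun P ε₀ ≤ hFun P ((1 - l) * ε₀ + l * pcX P) := by
  obtain ⟨F, hF, hFu, -⟩ := hFun_attained P hM hN hε₀
  set G : Fin N → Fin (N + 1) → ℝ := (1 - l) • F + l • (F0 : Fin N → Fin (N + 1) → ℝ) with hG
  have hl0' : (0:ℝ) ≤ 1 - l := by linarith
  have hGK : G ∈ Kset P ((1 - l) * ε₀ + l * pcX P) := by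
    obtain ⟨⟨hFpos, hFrow⟩, hFP⟩ := hF
    refine ⟨⟨fun y z => ?_, fun y => ?_⟩, ?_⟩
    · have : G y z = (1 - l) * F y z + l * F0 y z := by simp [hG]
      rw [this]
      exact add_nonneg (mul_nonneg hl0' (hFpos y z))
        (mul_nonneg (le_of_lt hl0) (F0_stoch.1 y z))
    · rw [hG, rowsum_comb, hFrow y, F0_stoch.2 y]; ring
    · calc privP P G ≤ (1 - l) * privP P F + l * privP P (F0 : Fin N → Fin (N + 1) → ℝ) :=
            privP_comb_le P hM hl0' (le_of_lt hl0) _ _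
        _ ≤ (1 - l) * ε₀ + l * pcX P := by
            rw [privP_F0]
            exact add_le_add (mul_le_mul_of_nonneg_left hFP hl0') le_rfl
  have hUG : (1 - l) * privU P F ≤ privU P G := by
    haveI : Nonempty (Fin N) := ⟨⟨0, hN⟩⟩
    rw [privU, privU, Finset.mul_sum]
    refine Finset.sum_le_sum fun z _ => ?_
    obtain ⟨y₀, hy₀max, hy₀eq⟩ := fin_sup_exists (fun y => (∑ x, P x y) * F y z)
    rw [hy₀eq]
    have hterm : (1 - l) * ((∑ x, P x y₀) * F y₀ z) ≤ (∑ x, P x y₀) * G y₀ z := by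
      have hGyz : G y₀ z = (1 - l) * F y₀ z + l * F0 y₀ z := by simp [hG]
      have hPy : (0:ℝ) ≤ ∑ x, P x y₀ := Finset.sum_nonneg fun x _ => hP.1 x _
      rw [hGyz, mul_add]
      nlinarith [F0_stoch.1 y₀ z, mul_nonneg (mul_nonneg (le_of_lt hl0) hPy) (F0_stoch.1 y₀ z)]
    exact hterm.trans (le_fin_sup (fun y => (∑ x, P x y) * G y z) y₀)
  calc (1 - l) * hFun P ε₀ = (1 - l) * privU P F := by rw [hFu]
    _ ≤ privU P G := hUG
    _ ≤ hFun P _ := le_hFun P hM hN hGK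

lemma hFun_continuousOn (hM : 0 < M) (hN : 0 < N) (hP : IsPmf P) {b : ℝ} :
    ContinuousOn (hFun P) (Set.Icc (pcX P) b) := by
  set a := pcX P with ha
  rw [Metric.continuousOn_iff]
  intro ε₀ hε₀ δ hδ
  obtain ⟨εr, hεr1, hεr2⟩ := key_right P hM hN hε₀.1 hδ
  by_cases hcase : a < ε₀
  · -- pick l for the left bound
    have hh0 : 0 ≤ hFun P ε₀ := hFun_nonneg P hM hN hP hε₀.1
    set l : ℝ := min (δ / (hFun P ε₀ + 1)) 1 with hl
    have hl0 : 0 < l := lt_min (div_pos hδ (by linarith)) one_pos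
    have hl1 : l ≤ 1 := min_le_right _ _
    set εl : ℝ := (1 - l) * ε₀ + l * a with hεl
    have hεl_lt : εl < ε₀ := by
      have : ε₀ - εl = l * (ε₀ - a) := by rw [hεl]; ring
      nlinarith
    have hεl_ge : a ≤ εl := by
      have : εl - a = (1 - l) * (ε₀ - a) := by rw [hεl]; ring
      nlinarith
    have hleft : hFun P ε₀ - δ < hFun P εl := by
      have h1 : (1 - l) * hFun P ε₀ ≤ hFun P εl := key_left P hM hN hP hε₀.1 hl0 hl1
      have h2 : l * hFun P ε₀ < δ := by
        have hld : l ≤ δ / (hFun P ε₀ + 1) := min_le_left _ _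
        have h3 : l * hFun P ε₀ ≤ (δ / (hFun P ε₀ + 1)) * hFun P ε₀ :=
          mul_le_mul_of_nonneg_right hld hh0
        have h4 : (δ / (hFun P ε₀ + 1)) * hFun P ε₀ < δ := by
          rw [div_mul_eq_mul_div, div_lt_iff₀ (by linarith)]
          nlinarith
        linarith
      nlinarith
    refine ⟨min (εr - ε₀) (ε₀ - εl), lt_min (by linarith) (by linarith), ?_⟩
    intro ε hε hdist
    rw [Real.dist_eq] at hdist
    rw [Real.dist_eq]
    have hd1 : ε < εr := by
      have h7 := (abs_lt.1 hdist).2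
      have h8 := min_le_left (εr - ε₀) (ε₀ - εl)
      linarith
    have hd2 : εl < ε := by
      have h5 := (abs_lt.1 hdist).1
      have h6 := min_le_right (εr - ε₀) (ε₀ - εl)
      linarith
    rcases le_or_gt ε₀ ε with hor | hor
    · have hup : hFun P ε ≤ hFun P εr := hFun_mono P hM hN (hε₀.1.trans hor) (le_of_lt hd1)
      have hlow : hFun P ε₀ ≤ hFun P ε := hFun_mono P hM hN hε₀.1 hor
      have := hεr2 εr (le_of_lt hεr1) le_rfl
      rw [abs_lt]
      constructor <;> linarith
    · have hup : hFun P ε ≤ hFun P ε₀ := hFun_mono P hM hN hε.1 (le_of_lt hor)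
      have hlow : hFun P εl ≤ hFun P ε := hFun_mono P hM hN hεl_ge (le_of_lt hd2)
      rw [abs_lt]
      constructor <;> linarith
  · -- ε₀ = a : only right side matters
    have hε₀a : ε₀ = a := le_antisymm (not_lt.1 hcase) hε₀.1
    refine ⟨εr - ε₀, by linarith, ?_⟩
    intro ε hε hdist
    rw [Real.dist_eq] at hdist
    rw [Real.dist_eq]
    have hεge : ε₀ ≤ ε := hε₀a ▸ hε.1
    have hd1 : ε < εr := by
      have := (abs_lt.1 hdist).2
      linarith
    have hup : hFun P ε ≤ hFun P εr := hFun_mono P hM hN (hε₀.1.trans hεge) (le_of_lt hd1)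
    have hlow : hFun P ε₀ ≤ hFun P ε := hFun_mono P hM hN hε₀.1 hεge
    have := hεr2 εr (le_of_lt hεr1) le_rfl
    rw [abs_lt]
    constructor <;> linarith

end continuity

section extreme

/-- The "tight constraint" solution predicate. -/
def GoodSol (T0 : Finset (Fin N × Fin (N + 1))) (T1 : Finset (Fin (N + 1) → Fin M))
    (ε : ℝ) (F : Fin N → Fin (N + 1) → ℝ) : Prop :=
  (∀ p ∈ T0, F p.1 p.2 = 0) ∧ (∀ y, ∑ z, F y z = 1) ∧ (∀ σ ∈ T1, Lsel P σ F = ε)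

/-- Uniqueness of tight solutions. -/
def UniqSol (T0 : Finset (Fin N × Fin (N + 1))) (T1 : Finset (Fin (N + 1) → Fin M)) : Prop :=
  ∀ ε F G, GoodSol P T0 T1 ε F → GoodSol P T0 T1 ε G → F = G

lemma Lsel_sub (σ : Fin (N + 1) → Fin M) (F G : Fin N → Fin (N + 1) → ℝ) :
    Lsel P σ (F - G) = Lsel P σ F - Lsel P σ G := by
  simp only [Lsel, Pi.sub_apply, mul_sub, Finset.sum_sub_distrib]

lemma Lsel_addsmul (σ : Fin (N + 1) → Fin M) (t : ℝ) (F H : Fin N → Fin (N + 1) → ℝ) :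
    Lsel P σ (F + t • H) = Lsel P σ F + t * Lsel P σ H := by
  simp only [Lsel, Pi.add_apply, Pi.smul_apply, smul_eq_mul, mul_add, Finset.sum_add_distrib,
    Finset.mul_sum]
  ring_nf
  congr 1
  refine Finset.sum_congr rfl fun z _ => Finset.sum_congr rfl fun y _ => by ring

lemma uniq_of_extreme (hM : 0 < M) {ε : ℝ} {Fs : Fin N → Fin (N + 1) → ℝ}
    (hext : Fs ∈ (Kset P ε).extremePoints ℝ)
    (T0 : Finset (Fin N × Fin (N + 1))) (T1 : Finset (Fin (N + 1) → Fin M))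
    (hT0 : ∀ p : Fin N × Fin (N + 1), p ∈ T0 ↔ Fs p.1 p.2 = 0)
    (hT1 : ∀ σ : Fin (N + 1) → Fin M, σ ∈ T1 ↔ Lsel P σ Fs = ε) :
    UniqSol P T0 T1 := by
  classical
  intro ε' F G hF hG
  by_contra hne
  set H : Fin N → Fin (N + 1) → ℝ := F - G with hHdef
  have hH0 : ∀ p ∈ T0, H p.1 p.2 = 0 := by
    intro p hp
    simp only [hHdef, Pi.sub_apply]
    rw [hF.1 p hp, hG.1 p hp, sub_zero]
  have hHrow : ∀ y, ∑ z, H y z = 0 := by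
    intro y
    simp only [hHdef, Pi.sub_apply, Finset.sum_sub_distrib]
    rw [hF.2.1 y, hG.2.1 y, sub_self]
  have hHL : ∀ σ ∈ T1, Lsel P σ H = 0 := by
    intro σ hσ
    rw [hHdef, Lsel_sub, hF.2.2 σ hσ, hG.2.2 σ hσ, sub_self]
  obtain ⟨hFsK, hextprop⟩ := hext
  have hFs_stoch : Fs ∈ filtSet N := hFsK.1
  have hFs_priv : privP P Fs ≤ ε := hFsK.2
  -- the step size
  set s1 : Finset (Fin N × Fin (N + 1)) := Finset.univ.filter (fun p => p ∉ T0) with hs1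
  set s2 : Finset (Fin (N + 1) → Fin M) := Finset.univ.filter (fun σ => σ ∉ T1) with hs2
  set v1 : Fin N × Fin (N + 1) → ℝ := fun p => Fs p.1 p.2 / (|H p.1 p.2| + 1) with hv1
  set v2 : (Fin (N + 1) → Fin M) → ℝ := fun σ => (ε - Lsel P σ Fs) / (|Lsel P σ H| + 1) with hv2
  set tset : Finset ℝ := insert (1:ℝ) (s1.image v1 ∪ s2.image v2) with htset
  set t : ℝ := tset.inf' (Finset.insert_nonempty _ _) id with ht
  have habs : ∀ r : ℝ, (0:ℝ) < |r| + 1 := fun r => by positivity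
  have ht_pos : 0 < t := by
    rw [ht, Finset.lt_inf'_iff]
    intro x hx
    rw [htset, Finset.mem_insert] at hx
    rcases hx with rfl | hx
    · exact one_pos
    rcases Finset.mem_union.1 hx with hx | hx
    · obtain ⟨p, hp, rfl⟩ := Finset.mem_image.1 hx
      rw [hs1, Finset.mem_filter] at hp
      have hpos : 0 < Fs p.1 p.2 :=
        lt_of_le_of_ne (hFs_stoch.1 p.1 p.2) (fun h => hp.2 ((hT0 p).2 h.symm))
      exact div_pos hpos (habs _)
    · obtain ⟨σ, hσ, rfl⟩ := Finset.mem_image.1 hx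
      rw [hs2, Finset.mem_filter] at hσ
      have hlt : Lsel P σ Fs < ε :=
        lt_of_le_of_ne ((Lsel_le_privP P hM σ Fs).trans hFs_priv) (fun h => hσ.2 ((hT1 σ).2 h))
      exact div_pos (by linarith) (habs _)
  have ht_le1 : ∀ p : Fin N × Fin (N + 1), p ∉ T0 → t ≤ v1 p := by
    intro p hp
    refine Finset.inf'_le id ?_
    rw [htset]
    exact Finset.mem_insert_of_mem (Finset.mem_union_left _
      (Finset.mem_image_of_mem v1 (by rw [hs1, Finset.mem_filter]; exact ⟨Finset.mem_univ _, hp⟩)))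
  have ht_le2 : ∀ σ : Fin (N + 1) → Fin M, σ ∉ T1 → t ≤ v2 σ := by
    intro σ hσ
    refine Finset.inf'_le id ?_
    rw [htset]
    exact Finset.mem_insert_of_mem (Finset.mem_union_right _
      (Finset.mem_image_of_mem v2 (by rw [hs2, Finset.mem_filter]; exact ⟨Finset.mem_univ _, hσ⟩)))
  -- bounds used for feasibility of the perturbations
  have hcoord : ∀ (y : Fin N) (z : Fin (N + 1)), t * |H y z| ≤ Fs y z := by
    intro y z
    by_cases hp : (y, z) ∈ T0
    · have : H y z = 0 := hH0 (y, z) hp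
      rw [this, abs_zero, mul_zero]
      exact hFs_stoch.1 y z
    · have h1 : t ≤ v1 (y, z) := ht_le1 (y, z) hp
      have h2 : t * (|H y z| + 1) ≤ Fs y z := by
        rw [hv1] at h1
        calc t * (|H y z| + 1) ≤ (Fs y z / (|H y z| + 1)) * (|H y z| + 1) :=
              mul_le_mul_of_nonneg_right h1 (le_of_lt (habs _))
          _ = Fs y z := div_mul_cancel₀ _ (ne_of_gt (habs _))
      nlinarith [abs_nonneg (H y z), ht_pos]
  have hLbound : ∀ σ : Fin (N + 1) → Fin M, t * |Lsel P σ H| ≤ ε - Lsel P σ Fs ∨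
      (σ ∈ T1 ∧ Lsel P σ H = 0) := by
    intro σ
    by_cases hσ : σ ∈ T1
    · exact Or.inr ⟨hσ, hHL σ hσ⟩
    · left
      have h1 : t ≤ v2 σ := ht_le2 σ hσ
      have h2 : t * (|Lsel P σ H| + 1) ≤ ε - Lsel P σ Fs := by
        rw [hv2] at h1
        calc t * (|Lsel P σ H| + 1)
            ≤ ((ε - Lsel P σ Fs) / (|Lsel P σ H| + 1)) * (|Lsel P σ H| + 1) :=
              mul_le_mul_of_nonneg_right h1 (le_of_lt (habs _))
          _ = ε - Lsel P σ Fs := div_mul_cancel₀ _ (ne_of_gt (habs _))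
      nlinarith [abs_nonneg (Lsel P σ H), ht_pos]
  -- the two perturbations are feasible
  have hmem : ∀ c : ℝ, |c| ≤ t → Fs + c • H ∈ Kset P ε := by
    intro c hc
    refine ⟨⟨fun y z => ?_, fun y => ?_⟩, ?_⟩
    · have h1 : |c * H y z| ≤ t * |H y z| := by
        rw [abs_mul]
        exact mul_le_mul_of_nonneg_right hc (abs_nonneg _)
      have h2 := hcoord y z
      have h3 : (Fs + c • H) y z = Fs y z + c * H y z := by simp
      rw [h3]
      have := abs_le.1 (h1.trans h2)
      linarith [this.1]
    · have : ∑ z, (Fs + c • H) y z = (∑ z, Fs y z) + c * ∑ z, H y z := by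
        simp [Finset.sum_add_distrib, Finset.mul_sum]
      rw [this, hFs_stoch.2 y, hHrow y, mul_zero, add_zero]
    · rw [privP_le_iff P hM]
      intro σ
      rw [Lsel_addsmul]
      rcases hLbound σ with h | h
      · have h1 : |c * Lsel P σ H| ≤ t * |Lsel P σ H| := by
          rw [abs_mul]
          exact mul_le_mul_of_nonneg_right hc (abs_nonneg _)
        have := abs_le.1 (h1.trans h)
        linarith [this.2]
      · rw [h.2, mul_zero, add_zero]
        rw [hT1] at h
        exact le_of_eq h.1
  have hmemp : Fs + t • H ∈ Kset P ε := hmem t (by rw [abs_of_pos ht_pos])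
  have hmemm : Fs + (-t) • H ∈ Kset P ε := hmem (-t) (by rw [abs_neg, abs_of_pos ht_pos])
  have hseg : Fs ∈ openSegment ℝ (Fs + t • H) (Fs + (-t) • H) := by
    refine ⟨1/2, 1/2, by norm_num, by norm_num, by norm_num, ?_⟩
    module
  have hcontr := hextprop hmemp hmemm hseg
  have : t • H = 0 := by
    have h := hcontr
    have : Fs + t • H - Fs = 0 := by rw [h]; abel
    simpa using this
  have hHne : H ≠ 0 := fun h => hne (sub_eq_zero.1 h)
  exact hHne (by
    have := smul_eq_zero.1 this
    rcases this with h | h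
    · exact absurd h (ne_of_gt ht_pos)
    · exact h)

end extreme

section face

/-- `Usel` as a linear map. -/
def UselLM (τ : Fin (N + 1) → Fin N) : (Fin N → Fin (N + 1) → ℝ) →ₗ[ℝ] ℝ where
  toFun := Usel P τ
  map_add' F G := by
    simp only [Usel, Pi.add_apply, mul_add, Finset.sum_add_distrib]
  map_smul' c F := by
    simp only [Usel, Pi.smul_apply, smul_eq_mul, RingHom.id_apply, Finset.mul_sum]
    exact Finset.sum_congr rfl fun z _ => by ring

lemma exists_extreme_max (hM : 0 < M) (hN : 0 < N) {ε : ℝ} (hε : pcX P ≤ ε) :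
    ∃ (τ : Fin (N + 1) → Fin N) (Fs : Fin N → Fin (N + 1) → ℝ),
      Fs ∈ (Kset P ε).extremePoints ℝ ∧ Usel P τ Fs = hFun P ε := by
  obtain ⟨Fh, hFh, hFhu, hFhmax⟩ := hFun_attained P hM hN hε
  obtain ⟨τ, hτ⟩ := exists_Usel_eq_privU P hN Fh
  set l : (Fin N → Fin (N + 1) → ℝ) →L[ℝ] ℝ := LinearMap.toContinuousLinearMap (UselLM P τ)
    with hl
  have hlapp : ∀ F, l F = Usel P τ F := fun F => rfl
  set Face : Set (Fin N → Fin (N + 1) → ℝ) :=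
    {F ∈ Kset P ε | ∀ G ∈ Kset P ε, l G ≤ l F} with hFace
  have hFhFace : Fh ∈ Face := by
    refine ⟨hFh, fun G hG => ?_⟩
    rw [hlapp, hlapp, hτ, hFhu]
    exact (Usel_le_privU P hN τ G).trans (hFhmax G hG)
  have hFaceclosed : IsClosed Face := by
    have : Face = Kset P ε ∩ ⋂ G ∈ Kset P ε, {F | l G ≤ l F} := by
      ext F
      simp only [hFace, Set.mem_setOf_eq, Set.mem_inter_iff, Set.mem_iInter]
    rw [this]
    exact (Kset_closed P hM ε).inter (isClosed_biInter fun G _ =>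
      isClosed_le continuous_const l.continuous)
  have hFacecomp : IsCompact Face :=
    IsCompact.of_isClosed_subset (Kset_compact P hM ε) hFaceclosed fun F hF => hF.1
  obtain ⟨Fs, hFs⟩ := hFacecomp.extremePoints_nonempty ⟨Fh, hFhFace⟩
  have hexposed : IsExposed ℝ (Kset P ε) Face := fun _ => ⟨l, rfl⟩
  have hFsK : Fs ∈ (Kset P ε).extremePoints ℝ :=
    hexposed.isExtreme.extremePoints_subset_extremePoints hFs
  refine ⟨τ, Fs, hFsK, ?_⟩
  have h1 : Usel P τ Fh ≤ Usel P τ Fs := by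
    have := hFs.1.2 Fh hFh
    rwa [hlapp, hlapp] at this
  have h2 : Usel P τ Fs ≤ hFun P ε :=
    (Usel_le_privU P hN τ Fs).trans (hFhmax Fs hFs.1.1)
  rw [hτ, hFhu] at h1
  linarith

lemma Usel_comb' (τ : Fin (N + 1) → Fin N) (a b : ℝ) (F G : Fin N → Fin (N + 1) → ℝ) :
    Usel P τ (a • F + b • G) = a * Usel P τ F + b * Usel P τ G := Usel_comb P τ a b F G

/-- Per-index affine value function. -/
lemma exists_affine_pair (τ : Fin (N + 1) → Fin N) (T0 : Finset (Fin N × Fin (N + 1)))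
    (T1 : Finset (Fin (N + 1) → Fin M)) :
    ∃ sq : ℝ × ℝ, UniqSol P T0 T1 →
      ∀ ε F, GoodSol P T0 T1 ε F → Usel P τ F = sq.1 * ε + sq.2 := by
  classical
  by_cases hU : UniqSol P T0 T1
  · by_cases hex : ∃ ε₁ F₁ ε₂ F₂, GoodSol P T0 T1 ε₁ F₁ ∧ GoodSol P T0 T1 ε₂ F₂ ∧ ε₁ ≠ ε₂
    · obtain ⟨ε₁, F₁, ε₂, F₂, h1, h2, hne⟩ := hex
      have hd : ε₂ - ε₁ ≠ 0 := sub_ne_zero.2 (Ne.symm hne)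
      refine ⟨⟨(Usel P τ F₂ - Usel P τ F₁) / (ε₂ - ε₁),
        Usel P τ F₁ - (Usel P τ F₂ - Usel P τ F₁) / (ε₂ - ε₁) * ε₁⟩, fun _ ε F hF => ?_⟩
      set tt : ℝ := (ε - ε₁) / (ε₂ - ε₁) with htt
      set G : Fin N → Fin (N + 1) → ℝ := (1 - tt) • F₁ + tt • F₂ with hG
      have hGgood : GoodSol P T0 T1 ε G := by
        refine ⟨fun p hp => ?_, fun y => ?_, fun σ hσ => ?_⟩
        · have : G p.1 p.2 = (1 - tt) * F₁ p.1 p.2 + tt * F₂ p.1 p.2 := by simp [hG]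
          rw [this, h1.1 p hp, h2.1 p hp]; ring
        · rw [hG, rowsum_comb, h1.2.1 y, h2.2.1 y]; ring
        · rw [hG, Lsel_comb, h1.2.2 σ hσ, h2.2.2 σ hσ, htt]
          field_simp
          ring
      have hFG : F = G := hU ε F G hF hGgood
      rw [hFG, hG, Usel_comb, htt]
      field_simp
      ring
    · by_cases hone : ∃ ε₀ F', GoodSol P T0 T1 ε₀ F'
      · obtain ⟨ε₀, F', hF'⟩ := hone
        refine ⟨⟨0, Usel P τ F'⟩, fun _ ε F hF => ?_⟩
        have hεeq : ε₀ = ε := by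
          by_contra hne
          exact hex ⟨ε₀, F', ε, F, hF', hF, hne⟩
        have : F = F' := hU ε F F' hF (hεeq ▸ hF')
        rw [this]
        simp
      · refine ⟨⟨0, 0⟩, fun _ ε F hF => absurd ⟨ε, F, hF⟩ hone⟩
  · exact ⟨⟨0, 0⟩, fun h => absurd h hU⟩

/-- The finite affine family. -/
lemma exists_affine_family :
    ∃ g : ((Fin (N + 1) → Fin N) × Finset (Fin N × Fin (N + 1)) ×
        Finset (Fin (N + 1) → Fin M)) → ℝ × ℝ,
      ∀ i, UniqSol P i.2.1 i.2.2 →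
        ∀ ε F, GoodSol P i.2.1 i.2.2 ε F → Usel P i.1 F = (g i).1 * ε + (g i).2 := by
  choose g hg using fun i : ((Fin (N + 1) → Fin N) × Finset (Fin N × Fin (N + 1)) ×
      Finset (Fin (N + 1) → Fin M)) => exists_affine_pair P i.1 i.2.1 i.2.2
  exact ⟨g, hg⟩

/-- At every feasible `ε` the value of `hFun` lies on one of finitely many affine graphs. -/
lemma hFun_affine_family (hM : 0 < M) (hN : 0 < N) :
    ∃ A : Finset (ℝ × ℝ), ∀ ε : ℝ, pcX P ≤ ε →
      ∃ p ∈ A, hFun P ε = p.1 * ε + p.2 := by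
  classical
  obtain ⟨g, hg⟩ := exists_affine_family P
  refine ⟨Finset.univ.image g, fun ε hε => ?_⟩
  obtain ⟨τ, Fs, hFs, hval⟩ := exists_extreme_max P hM hN hε
  set T0 : Finset (Fin N × Fin (N + 1)) :=
    Finset.univ.filter (fun p => Fs p.1 p.2 = 0) with hT0
  set T1 : Finset (Fin (N + 1) → Fin M) :=
    Finset.univ.filter (fun σ => Lsel P σ Fs = ε) with hT1
  have hT0iff : ∀ p : Fin N × Fin (N + 1), p ∈ T0 ↔ Fs p.1 p.2 = 0 := by
    intro p; rw [hT0, Finset.mem_filter]; simp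
  have hT1iff : ∀ σ : Fin (N + 1) → Fin M, σ ∈ T1 ↔ Lsel P σ Fs = ε := by
    intro σ; rw [hT1, Finset.mem_filter]; simp
  have hUniq : UniqSol P T0 T1 := uniq_of_extreme P hM hFs T0 T1 hT0iff hT1iff
  have hGood : GoodSol P T0 T1 ε Fs :=
    ⟨fun p hp => (hT0iff p).1 hp, hFs.1.1.2, fun σ hσ => (hT1iff σ).1 hσ⟩
  refine ⟨g (τ, T0, T1), Finset.mem_image_of_mem g (Finset.mem_univ _), ?_⟩
  rw [← hval]
  exact hg (τ, T0, T1) hUniq ε Fs hGood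

end face

section assembly

/-- Extending an affine identity from an open interval to its closure, under continuity. -/
lemma affine_extend {f : ℝ → ℝ} {u v s q x : ℝ} (huv : u < v) (hx : x ∈ Set.Icc u v)
    (hcwa : ContinuousWithinAt f (Set.Ioo u v) x)
    (heq : ∀ y ∈ Set.Ioo u v, f y = s * y + q) : f x = s * x + q := by
  have hxcl : x ∈ closure (Set.Ioo u v) := by
    rw [closure_Ioo (ne_of_lt huv)]; exact hx
  haveI hne : (nhdsWithin x (Set.Ioo u v)).NeBot := mem_closure_iff_nhdsWithin_neBot.1 hxcl
  have htend1 : Filter.Tendsto f (nhdsWithin x (Set.Ioo u v)) (nhds (f x)) := hcwa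
  have htend2 : Filter.Tendsto f (nhdsWithin x (Set.Ioo u v)) (nhds (s * x + q)) := by
    have hlin : Filter.Tendsto (fun y => s * y + q) (nhdsWithin x (Set.Ioo u v))
        (nhds (s * x + q)) :=
      (((continuous_const.mul continuous_id).add continuous_const).tendsto x).mono_left
        nhdsWithin_le_nhds
    refine hlin.congr' ?_
    filter_upwards [self_mem_nhdsWithin] with y hy
    exact (heq y hy).symm
  exact tendsto_nhds_unique htend1 htend2

/-- A continuous function on `[a,b]` whose values pointwise lie on one of finitely many
affine graphs is piecewise affine. -/
lemma piecewise_of_affine_family {f : ℝ → ℝ} {a b : ℝ} (hab : a < b)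
    (hcont : ContinuousOn f (Set.Icc a b)) (A : Finset (ℝ × ℝ))
    (hA : ∀ x ∈ Set.Icc a b, ∃ p ∈ A, f x = p.1 * x + p.2) :
    ∃ K : ℕ, 1 ≤ K ∧ ∃ e : Fin (K + 1) → ℝ, StrictMono e ∧ e 0 = a ∧ e (Fin.last K) = b ∧
      ∀ i : Fin K, ∃ s q : ℝ, ∀ x ∈ Set.Icc (e i.castSucc) (e i.succ), f x = s * x + q := by
  classical
  set C : Finset ℝ := insert a (insert b ((((A ×ˢ A).image
      (fun pp : (ℝ × ℝ) × (ℝ × ℝ) => (pp.2.2 - pp.1.2) / (pp.1.1 - pp.2.1))).filter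
      (fun x => x ∈ Set.Icc a b)))) with hC
  have haC : a ∈ C := Finset.mem_insert_self _ _
  have hbC : b ∈ C := Finset.mem_insert_of_mem (Finset.mem_insert_self _ _)
  have hCsub : ∀ x ∈ C, x ∈ Set.Icc a b := by
    intro x hx
    rw [hC, Finset.mem_insert, Finset.mem_insert] at hx
    rcases hx with rfl | rfl | hx
    · exact ⟨le_refl _, le_of_lt hab⟩
    · exact ⟨le_of_lt hab, le_refl _⟩
    · exact (Finset.mem_filter.1 hx).2
  have hcross : ∀ x ∈ Set.Icc a b, ∀ p ∈ A, ∀ p' ∈ A, p ≠ p' →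
      p.1 * x + p.2 = p'.1 * x + p'.2 → x ∈ C := by
    intro x hx p hp p' hp' hne heq
    have hs : p.1 ≠ p'.1 := by
      intro hs
      apply hne
      have : p.2 = p'.2 := by rw [hs] at heq; linarith
      exact Prod.ext hs this
    have hxval : x = (p'.2 - p.2) / (p.1 - p'.1) := by
      have h1 : (p.1 - p'.1) * x = p'.2 - p.2 := by linarith
      field_simp [sub_ne_zero.2 hs]
      linarith
    rw [hC]
    refine Finset.mem_insert_of_mem (Finset.mem_insert_of_mem (Finset.mem_filter.2 ⟨?_, hx⟩))
    refine Finset.mem_image.2 ⟨(p, p'), Finset.mem_product.2 ⟨hp, hp'⟩, ?_⟩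
    exact hxval.symm
  have hCne : C.Nonempty := ⟨a, haC⟩
  have hcard2 : 1 < C.card := Finset.one_lt_card.2 ⟨a, haC, b, hbC, ne_of_lt hab⟩
  set K : ℕ := C.card - 1 with hK
  have hK1 : 1 ≤ K := by omega
  have hcard : C.card = K + 1 := by omega
  set e : Fin (K + 1) → ℝ := fun i => C.orderEmbOfFin hcard i with he
  have hemem : ∀ i, e i ∈ C := fun i => by
    have := Finset.range_orderEmbOfFin C hcard
    rw [he]
    have : C.orderEmbOfFin hcard i ∈ Set.range (C.orderEmbOfFin hcard) := Set.mem_range_self i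
    rwa [Finset.range_orderEmbOfFin C hcard] at this
  have hmono : StrictMono e := (C.orderEmbOfFin hcard).strictMono
  have he0 : e 0 = a := by
    have hrw : e 0 = C.orderEmbOfFin hcard ⟨0, Nat.succ_pos K⟩ := rfl
    rw [hrw, Finset.orderEmbOfFin_zero hcard (Nat.succ_pos K)]
    refine le_antisymm (Finset.min'_le _ _ haC) (Finset.le_min' _ _ _ fun x hx => (hCsub x hx).1)
  have helast : e (Fin.last K) = b := by
    have hrw : e (Fin.last K)
        = C.orderEmbOfFin hcard ⟨(K + 1) - 1, Nat.sub_lt (Nat.succ_pos K) Nat.one_pos⟩ := rfl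
    rw [hrw, Finset.orderEmbOfFin_last hcard (Nat.succ_pos K)]
    refine le_antisymm (Finset.max'_le _ _ _ fun x hx => (hCsub x hx).2) (Finset.le_max' _ _ hbC)
  refine ⟨K, hK1, e, hmono, he0, helast, ?_⟩
  intro i
  set u : ℝ := e i.castSucc with hu
  set v : ℝ := e i.succ with hv
  have huv : u < v := hmono Fin.castSucc_lt_succ
  have huab : u ∈ Set.Icc a b := hCsub _ (hemem _)
  have hvab : v ∈ Set.Icc a b := hCsub _ (hemem _)
  have hIooab : Set.Ioo u v ⊆ Set.Icc a b := fun x hx =>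
    ⟨huab.1.trans (le_of_lt hx.1), (le_of_lt hx.2).trans hvab.2⟩
  have hIccab : Set.Icc u v ⊆ Set.Icc a b := fun x hx =>
    ⟨huab.1.trans hx.1, hx.2.trans hvab.2⟩
  -- no crossing point lies strictly inside the piece
  have hnc : ∀ x ∈ Set.Ioo u v, x ∉ C := by
    intro x hx hxC
    have : x ∈ Set.range (C.orderEmbOfFin hcard) := by
      rw [Finset.range_orderEmbOfFin C hcard]; exact hxC
    obtain ⟨j, hj⟩ := this
    have h1 : u < e j := by rw [show e j = x from hj]; exact hx.1
    have h2 : e j < v := by rw [show e j = x from hj]; exact hx.2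
    have hj1 : i.castSucc < j := hmono.lt_iff_lt.1 h1
    have hj2 : j < i.succ := hmono.lt_iff_lt.1 h2
    rw [Fin.lt_def] at hj1 hj2
    simp only [Fin.coe_castSucc, Fin.val_succ] at hj1 hj2
    omega
  -- the midpoint and its affine graph
  set x₀ : ℝ := (u + v) / 2 with hx₀
  have hx₀Ioo : x₀ ∈ Set.Ioo u v := ⟨by rw [hx₀]; linarith, by rw [hx₀]; linarith⟩
  obtain ⟨p₀, hp₀A, hp₀eq⟩ := hA x₀ (hIooab hx₀Ioo)
  -- on the open interval the function agrees with the graph of `p₀`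
  have hIoo : ∀ x ∈ Set.Ioo u v, f x = p₀.1 * x + p₀.2 := by
    rcases (A.erase p₀).eq_empty_or_nonempty with hE | hE
    · intro x hx
      obtain ⟨p, hpA, hpeq⟩ := hA x (hIooab hx)
      have : p = p₀ := by
        by_contra hne
        exact (Finset.eq_empty_iff_forall_notMem.1 hE p) (Finset.mem_erase.2 ⟨hne, hpA⟩)
      rwa [this] at hpeq
    · set Uop : Set ℝ := ⋂ p ∈ A.erase p₀, (Set.Ioo u v ∩ {x | f x ≠ p.1 * x + p.2}) with hUop
      set Vop : Set ℝ := Set.Ioo u v ∩ {x | f x ≠ p₀.1 * x + p₀.2} with hVop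
      have hUopen : IsOpen Uop := by
        refine isOpen_biInter_finset fun p _ => ?_
        have : Set.Ioo u v ∩ {x | f x ≠ p.1 * x + p.2}
            = Set.Ioo u v ∩ (fun x => f x - (p.1 * x + p.2)) ⁻¹' ({0}ᶜ) := by
          ext x
          simp [sub_eq_zero]
        rw [this]
        refine ContinuousOn.isOpen_inter_preimage ?_ isOpen_Ioo (isOpen_compl_iff.2 isClosed_singleton)
        exact (hcont.mono hIooab).sub
          (((continuous_const.mul continuous_id).add continuous_const).continuousOn)
      have hVopen : IsOpen Vop := by
        have : Vop = Set.Ioo u v ∩ (fun x => f x - (p₀.1 * x + p₀.2)) ⁻¹' ({0}ᶜ) := by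
          rw [hVop]; ext x; simp [sub_eq_zero]
        rw [this]
        refine ContinuousOn.isOpen_inter_preimage ?_ isOpen_Ioo (isOpen_compl_iff.2 isClosed_singleton)
        exact (hcont.mono hIooab).sub
          (((continuous_const.mul continuous_id).add continuous_const).continuousOn)
      have hUmem : ∀ x, x ∈ Uop ↔ (∀ p ∈ A.erase p₀, x ∈ Set.Ioo u v ∧ f x ≠ p.1 * x + p.2) := by
        intro x
        rw [hUop]
        simp only [Set.mem_iInter, Set.mem_inter_iff, Set.mem_setOf_eq]
      have hdisj : Disjoint Uop Vop := by
        rw [Set.disjoint_left]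
        intro x hxU hxV
        obtain ⟨hxIoo, hxneq⟩ := hxV
        obtain ⟨p, hpA, hpeq⟩ := hA x (hIooab hxIoo)
        have hpne : p ≠ p₀ := fun h => hxneq (h ▸ hpeq)
        exact ((hUmem x).1 hxU p (Finset.mem_erase.2 ⟨hpne, hpA⟩)).2 hpeq
      have hcover : Set.Ioo u v ⊆ Uop ∪ Vop := by
        intro x hx
        by_cases hfx : f x = p₀.1 * x + p₀.2
        · left
          refine (hUmem x).2 fun p hp => ⟨hx, fun heq => ?_⟩
          have hpA := (Finset.mem_erase.1 hp).2
          have hpne := (Finset.mem_erase.1 hp).1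
          exact hnc x hx (hcross x (hIooab hx) p hpA p₀ hp₀A hpne (by rw [← heq, hfx]))
        · exact Or.inr ⟨hx, hfx⟩
      have hx₀U : x₀ ∈ Uop := by
        refine (hUmem x₀).2 fun p hp => ⟨hx₀Ioo, fun heq => ?_⟩
        have hpA := (Finset.mem_erase.1 hp).2
        have hpne := (Finset.mem_erase.1 hp).1
        exact hnc x₀ hx₀Ioo (hcross x₀ (hIooab hx₀Ioo) p hpA p₀ hp₀A hpne (by rw [← heq, hp₀eq]))
      have hconn : IsPreconnected (Set.Ioo u v) := isPreconnected_Ioo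
      have hsubU : Set.Ioo u v ⊆ Uop :=
        hconn.subset_left_of_subset_union hUopen hVopen hdisj hcover ⟨x₀, hx₀Ioo, hx₀U⟩
      intro x hx
      have hxU := hsubU hx
      by_contra hfx
      exact (Set.disjoint_left.1 hdisj hxU ⟨hx, hfx⟩)
  refine ⟨p₀.1, p₀.2, fun x hx => ?_⟩
  exact affine_extend huv hx ((hcont x (hIccab hx)).mono hIooab) hIoo

end assembly

end PWL

/-- Piecewise linearity of `h(P_{XY}, ·)` on `[P_c(X), P_c(X|Y)]`: there are `K ≥ 1` and
thresholds `P_c(X) = ε_0 < ε_1 < … < ε_K = P_c(X|Y)` such that `h(P_{XY}, ·)` is affine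
on each `[ε_{i-1}, ε_i]`. -/
theorem hFun_piecewise_linear {M N : ℕ} (hM : 0 < M) (hN : 0 < N)
    (P : Fin M → Fin N → ℝ) (hP : IsPmf P) (hlt : pcX P < pcXgY P) :
    ∃ K : ℕ, 1 ≤ K ∧ ∃ e : Fin (K + 1) → ℝ,
      StrictMono e ∧ e 0 = pcX P ∧ e (Fin.last K) = pcXgY P ∧
      ∀ i : Fin K, ∃ a b : ℝ,
        ∀ ε ∈ Set.Icc (e i.castSucc) (e i.succ), hFun P ε = a * ε + b := by
  obtain ⟨A, hA⟩ := PWL.hFun_affine_family P hM hN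
  exact PWL.piecewise_of_affine_family hlt (PWL.hFun_continuousOn P hM hN hP) A
    (fun x hx => hA x hx.1)
end
end

section
/- For every G ∈ ℱ there exists δ > 0 such that for every direction D ∈ 𝒟(G), the map t ↦ ℋ(G + tD) = (𝒫(G+tD), 𝒰(G+tD)) is affine on the interval [0, min(δ, t_D)], where t_D := sup{ t > 0 : G + tD ∈ ℱ }. -/
noncomputable section

lemma aux_key {ι : Type*} [Fintype ι] [Nonempty ι] (c d : ι → ℝ) (hd : ∀ i, |d i| ≤ 1)
    (δ : ℝ) (hδ : 0 < δ) (hgap : ∀ i j, c i ≠ c j → 2 * δ ≤ |c i - c j|) :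
    ∃ i₀, ∀ t ∈ Set.Icc (0 : ℝ) δ, (⨆ i, (c i + t * d i)) = c i₀ + t * d i₀ := by
  obtain ⟨i₀, hi₀⟩ := Finite.exists_max (fun i => c i + (δ / 2) * d i)
  refine ⟨i₀, fun t ht => ?_⟩
  have key : ∀ i, c i + t * d i ≤ c i₀ + t * d i₀ := by
    intro i
    have h1 := hi₀ i
    have hdi := abs_le.mp (hd i)
    have hdi₀ := abs_le.mp (hd i₀)
    by_cases hc : c i = c i₀
    · have hdle : d i ≤ d i₀ := by nlinarith
      nlinarith [ht.1]
    · have h2 : 2 * δ ≤ |c i - c i₀| := hgap i i₀ hc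
      have hci : c i + 2 * δ ≤ c i₀ := by
        rcases abs_cases (c i - c i₀) with ⟨h, h'⟩ | ⟨h, h'⟩
        · exfalso; nlinarith
        · linarith
      nlinarith [ht.1, ht.2]
  exact le_antisymm (ciSup_le key)
    (le_ciSup (f := fun i => c i + t * d i) (Set.Finite.bddAbove (Set.finite_range _)) i₀)


/-- For every `G ∈ ℱ` there exists `δ > 0` such that, for every direction
`D ∈ 𝒟(G)` (a matrix of unit Euclidean/Frobenius norm with `G + tD ∈ ℱ` for some
`t > 0`), the map `t ↦ ℋ(G + tD) = (𝒫(G+tD), 𝒰(G+tD))` is affine on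
`[0, min(δ, t_D)]`, where `t_D = sup { t > 0 : G + tD ∈ ℱ }`. -/
theorem locally_affine {M N : ℕ} (hM : 0 < M) (hN : 0 < N)
    (P : Fin M → Fin N → ℝ) (hP : IsPmf P)
    (G : Fin N → Fin (N + 1) → ℝ) (hG : G ∈ filtSet N) :
    ∃ δ > (0 : ℝ), ∀ D : Fin N → Fin (N + 1) → ℝ,
      Real.sqrt (∑ y, ∑ z, (D y z) ^ 2) = 1 →
      (∃ t > (0 : ℝ), (fun y z => G y z + t * D y z) ∈ filtSet N) →
      ∃ a₁ b₁ a₂ b₂ : ℝ,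
        ∀ t ∈ Set.Icc (0 : ℝ)
            (min δ (sSup {t : ℝ | 0 < t ∧ (fun y z => G y z + t * D y z) ∈ filtSet N})),
          privP P (fun y z => G y z + t * D y z) = a₁ * t + b₁ ∧
          privU P (fun y z => G y z + t * D y z) = a₂ * t + b₂ := by
  classical
  haveI : Nonempty (Fin M) := Fin.pos_iff_nonempty.mp hM
  haveI : Nonempty (Fin N) := Fin.pos_iff_nonempty.mp hN
  set cP : Fin (N + 1) → Fin M → ℝ := fun z x => ∑ y, P x y * G y z with hcPdef
  set cU : Fin (N + 1) → Fin N → ℝ := fun z y => (∑ x, P x y) * G y z with hcUdef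
  set S : Finset ℝ :=
    (((Finset.univ : Finset (Fin (N + 1) × Fin M × Fin M)).image
        (fun p => |cP p.1 p.2.1 - cP p.1 p.2.2|) ∪
      (Finset.univ : Finset (Fin (N + 1) × Fin N × Fin N)).image
        (fun p => |cU p.1 p.2.1 - cU p.1 p.2.2|)).filter (fun r => 0 < r)) with hS
  have hSpos : ∀ r ∈ S, 0 < r := fun r hr => (Finset.mem_filter.mp hr).2
  set δ : ℝ := if h : S.Nonempty then S.min' h / 2 else 1 with hδdef
  have hδpos : 0 < δ := by
    rw [hδdef]
    split
    · next h => linarith [hSpos _ (S.min'_mem h)]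
    · norm_num
  have hgapP : ∀ z x x', cP z x ≠ cP z x' → 2 * δ ≤ |cP z x - cP z x'| := by
    intro z x x' hne
    have hmem : |cP z x - cP z x'| ∈ S := by
      refine Finset.mem_filter.mpr ⟨Finset.mem_union_left _ ?_,
        abs_pos.mpr (sub_ne_zero.mpr hne)⟩
      exact Finset.mem_image.mpr ⟨(z, x, x'), Finset.mem_univ _, rfl⟩
    have hne' : S.Nonempty := ⟨_, hmem⟩
    rw [hδdef, dif_pos hne']
    linarith [S.min'_le _ hmem]
  have hgapU : ∀ z y y', cU z y ≠ cU z y' → 2 * δ ≤ |cU z y - cU z y'| := by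
    intro z y y' hne
    have hmem : |cU z y - cU z y'| ∈ S := by
      refine Finset.mem_filter.mpr ⟨Finset.mem_union_right _ ?_,
        abs_pos.mpr (sub_ne_zero.mpr hne)⟩
      exact Finset.mem_image.mpr ⟨(z, y, y'), Finset.mem_univ _, rfl⟩
    have hne' : S.Nonempty := ⟨_, hmem⟩
    rw [hδdef, dif_pos hne']
    linarith [S.min'_le _ hmem]
  refine ⟨δ, hδpos, ?_⟩
  intro D hD _hex
  have hPnn := hP.1
  have hD2 : ∑ y, ∑ z, D y z ^ 2 = 1 := by
    have h0 : (0 : ℝ) ≤ ∑ y, ∑ z, D y z ^ 2 :=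
      Finset.sum_nonneg fun y _ => Finset.sum_nonneg fun z _ => sq_nonneg _
    nlinarith [Real.sq_sqrt h0, hD]
  have hDle : ∀ y z, |D y z| ≤ 1 := by
    intro y z
    have h1 : D y z ^ 2 ≤ ∑ z', D y z' ^ 2 :=
      Finset.single_le_sum (f := fun z' => D y z' ^ 2) (fun z' _ => sq_nonneg _)
        (Finset.mem_univ z)
    have h2 : (∑ z, D y z ^ 2) ≤ ∑ y, ∑ z, D y z ^ 2 :=
      Finset.single_le_sum (f := fun y => ∑ z, D y z ^ 2)
        (fun y _ => Finset.sum_nonneg fun z _ => sq_nonneg _) (Finset.mem_univ y)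
    have : D y z ^ 2 ≤ 1 := by rw [← hD2]; linarith
    exact abs_le.mpr ⟨by nlinarith, by nlinarith⟩
  have hrow : ∀ x, ∑ y, P x y ≤ 1 := by
    intro x
    have := Finset.single_le_sum (f := fun x => ∑ y, P x y)
      (fun i _ => Finset.sum_nonneg fun y _ => hPnn i y) (Finset.mem_univ x)
    rw [hP.2] at this
    exact this
  have hcolnn : ∀ y, 0 ≤ ∑ x, P x y := fun y => Finset.sum_nonneg fun x _ => hPnn x y
  have hcol : ∀ y, ∑ x, P x y ≤ 1 := by
    intro y
    calc ∑ x, P x y ≤ ∑ x, ∑ y', P x y' :=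
          Finset.sum_le_sum fun x _ =>
            Finset.single_le_sum (fun y' _ => hPnn x y') (Finset.mem_univ y)
      _ = 1 := hP.2
  set dP : Fin (N + 1) → Fin M → ℝ := fun z x => ∑ y, P x y * D y z with hdPdef
  set dU : Fin (N + 1) → Fin N → ℝ := fun z y => (∑ x, P x y) * D y z with hdUdef
  have hdP : ∀ z x, |dP z x| ≤ 1 := by
    intro z x
    calc |dP z x| ≤ ∑ y, |P x y * D y z| := Finset.abs_sum_le_sum_abs _ _
      _ = ∑ y, P x y * |D y z| := by
          refine Finset.sum_congr rfl fun y _ => ?_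
          rw [abs_mul, abs_of_nonneg (hPnn x y)]
      _ ≤ ∑ y, P x y * 1 :=
          Finset.sum_le_sum fun y _ => mul_le_mul_of_nonneg_left (hDle y z) (hPnn x y)
      _ ≤ 1 := by simpa using hrow x
  have hdU : ∀ z y, |dU z y| ≤ 1 := by
    intro z y
    rw [hdUdef]
    simp only
    rw [abs_mul, abs_of_nonneg (hcolnn y)]
    calc (∑ x, P x y) * |D y z| ≤ 1 * 1 :=
          mul_le_mul (hcol y) (hDle y z) (abs_nonneg _) zero_le_one
      _ = 1 := one_mul 1
  choose xsel hxsel using fun z => aux_key (cP z) (dP z) (hdP z) δ hδpos (hgapP z)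
  choose ysel hysel using fun z => aux_key (cU z) (dU z) (hdU z) δ hδpos (hgapU z)
  refine ⟨∑ z, dP z (xsel z), ∑ z, cP z (xsel z), ∑ z, dU z (ysel z), ∑ z, cU z (ysel z),
    fun t ht => ?_⟩
  have ht' : t ∈ Set.Icc (0 : ℝ) δ := ⟨ht.1, le_trans ht.2 (min_le_left _ _)⟩
  constructor
  · unfold privP
    have hz : ∀ z : Fin (N + 1),
        (⨆ x, ∑ y, P x y * (G y z + t * D y z)) = cP z (xsel z) + t * dP z (xsel z) := by
      intro z
      rw [← hxsel z t ht']
      congr 1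
      funext x
      rw [hcPdef, hdPdef]
      simp only
      rw [Finset.mul_sum, ← Finset.sum_add_distrib]
      exact Finset.sum_congr rfl fun y _ => by ring
    rw [Finset.sum_congr rfl (fun z _ => hz z), Finset.sum_add_distrib, ← Finset.mul_sum]
    ring
  · unfold privU
    have hz : ∀ z : Fin (N + 1),
        (⨆ y, (∑ x, P x y) * (G y z + t * D y z)) = cU z (ysel z) + t * dU z (ysel z) := by
      intro z
      rw [← hysel z t ht']
      congr 1
      funext y
      rw [hcUdef, hdUdef]
      simp only
      ring
    rw [Finset.sum_congr rfl (fun z _ => hz z), Finset.sum_add_distrib, ← Finset.mul_sum]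
    ring
end
end
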